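/- arXiv:2208.09441 — 8 statements merged into one kernel-verified Lean document; each statement's English description precedes it below -/
import Mathlib

section
/- If A is a subset of the integers satisfying property P(h), then the intersection of A with the positive integers is a B_h-set. -/
/-- `s` is a representation of `D` as a sum of `h` elements of `A` (as a multiset). -/
def IsRep (A : Set ℤ) (h : ℕ) (D : ℤ) (s : Multiset ℤ) : Prop :=
  Multiset.card s = h ∧ (∀ x ∈ s, x ∈ A) ∧ s.sum = D

/-- A core multiset for property `P(h)`: at most `h` elements of `A`, with the same
parity of cardinality as `h`, and with `aᵢ ≠ -aⱼ` for `i ≠ j`. -/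
def IsCore (A : Set ℤ) (h : ℕ) (c : Multiset ℤ) : Prop :=
  Multiset.card c ≤ h ∧ Multiset.card c % 2 = h % 2 ∧ (∀ x ∈ c, x ∈ A) ∧
    ∀ x ∈ c, -x ∉ c.erase x

/-- `s` is, up to permutation, the core `c` together with cancelling pairs `(u, -u)`
with `u ∈ A ∩ (-A)`. -/
def MatchesCore (A : Set ℤ) (c s : Multiset ℤ) : Prop :=
  ∃ p : Multiset ℤ, (∀ u ∈ p, u ∈ A ∧ -u ∈ A) ∧ s = c + p + p.map (fun u => -u)

/-- Property `P(h)`: every `D` in the `h`-fold sumset of `A` has a unique core, such that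
every representation of `D` as a sum of `h` elements of `A` is a permutation of the core
together with cancelling pairs `(u, -u)`, `u ∈ A ∩ (-A)`. -/
def PropertyP (A : Set ℤ) (h : ℕ) : Prop :=
  ∀ D : ℤ, (∃ s, IsRep A h D s) →
    ∃! c : Multiset ℤ, IsCore A h c ∧ ∀ s, IsRep A h D s → MatchesCore A c s

/-- `S` is a `B_h`-set: any two `h`-tuples of elements of `S` with equal sums are
permutations of each other. -/
def IsBhSet (S : Set ℤ) (h : ℕ) : Prop :=
  ∀ s t : Multiset ℤ, Multiset.card s = h → Multiset.card t = h →
    (∀ x ∈ s, x ∈ S) → (∀ x ∈ t, x ∈ S) → s.sum = t.sum → s = t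

/-- If A satisfies property P(h), then A intersected with the positive integers is a
B_h-set. -/
theorem statement0 (h : ℕ) (A : Set ℤ) (hh : 2 ≤ h) (hA : PropertyP A h) :
    IsBhSet {n : ℤ | n ∈ A ∧ 0 < n} h := by
  intro s t hs ht hsS htS hsum
  have hrep_s : IsRep A h s.sum s := ⟨hs, fun x hx => (hsS x hx).1, rfl⟩
  have hrep_t : IsRep A h s.sum t := ⟨ht, fun x hx => (htS x hx).1, hsum.symm⟩
  obtain ⟨c, ⟨_, hall⟩, _⟩ := hA s.sum ⟨s, hrep_s⟩
  have key : ∀ w : Multiset ℤ, (∀ x ∈ w, x ∈ A ∧ (0:ℤ) < x) → MatchesCore A c w → w = c := by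
    intro w hw ⟨p, _, hweq⟩
    have hp0 : p = 0 := by
      rw [Multiset.eq_zero_iff_forall_notMem]
      intro u hu
      have h1 : u ∈ w := by rw [hweq]; simp [hu]
      have h2 : -u ∈ w := by
        rw [hweq]
        refine Multiset.mem_add.2 (Or.inr ?_)
        exact Multiset.mem_map.2 ⟨u, hu, rfl⟩
      have := (hw u h1).2
      have := (hw (-u) h2).2
      omega
    rw [hweq, hp0]; simp
  rw [key s hsS (hall s hrep_s), key t htS (hall t hrep_t)]
end

section
/- If A ⊆ ℤ satisfies property P(h) and |A ∩ (-A)| ≤ 2, then A is a B_h-set. -/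
/-- If every element of `p` is `u` or `-u`, then `p` together with its negation is
just `card p` copies of `u` and `card p` copies of `-u`. -/
lemma pair_eq (u : ℤ) : ∀ (p : Multiset ℤ), (∀ x ∈ p, x = u ∨ x = -u) →
    p + p.map (fun x => -x) =
      Multiset.replicate (Multiset.card p) u + Multiset.replicate (Multiset.card p) (-u) := by
  intro p
  induction p using Multiset.induction with
  | empty => simp
  | cons a p ih =>
    intro hp
    have ha := hp a (Multiset.mem_cons_self a p)
    have hrest : ∀ x ∈ p, x = u ∨ x = -u := fun x hx => hp x (Multiset.mem_cons_of_mem hx)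
    have hih := ih hrest
    have key : (a ::ₘ p) + (a ::ₘ p).map (fun x => -x)
        = a ::ₘ (-a) ::ₘ (p + p.map (fun x => -x)) := by
      simp only [Multiset.map_cons, Multiset.cons_add, Multiset.add_cons]
      rw [Multiset.cons_swap]
    rw [key, hih, Multiset.card_cons]
    rcases ha with rfl | rfl
    · simp only [Multiset.replicate_succ, Multiset.cons_add, Multiset.add_cons]
      rw [Multiset.cons_swap]
    · rw [neg_neg, Multiset.cons_swap]
      simp only [Multiset.replicate_succ, Multiset.cons_add, Multiset.add_cons]
      rw [Multiset.cons_swap]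

lemma exists_u (A : Set ℤ) (hsym : Set.encard (A ∩ (-A)) ≤ 2) :
    ∃ u : ℤ, ∀ x, x ∈ A → -x ∈ A → (x = u ∨ x = -u) := by
  set B := A ∩ (-A) with hB
  have hmem : ∀ x, x ∈ B ↔ (x ∈ A ∧ -x ∈ A) := by
    intro x; simp [hB, Set.mem_neg]
  by_cases hne : B.Nonempty
  · obtain ⟨u, hu⟩ := hne
    refine ⟨u, ?_⟩
    by_contra hcon
    push_neg at hcon
    obtain ⟨v, hv1, hv2, hvu, hvnu⟩ := hcon
    have hvB : v ∈ B := (hmem v).2 ⟨hv1, hv2⟩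
    have hnvB : -v ∈ B := (hmem (-v)).2 ⟨by simpa using hv2, by simpa using hv1⟩
    have huA : u ∈ A ∧ -u ∈ A := (hmem u).1 hu
    have hnuB : -u ∈ B := (hmem (-u)).2 ⟨huA.2, by simpa using huA.1⟩
    by_cases hu0 : u = -u
    · -- u = 0, use {u, v, -v}
      have hvnv : v ≠ -v := by
        intro hvv
        have : v = 0 := by omega
        have : u = 0 := by omega
        omega
      have hsub : ({u, v, -v} : Set ℤ) ⊆ B := by
        intro x hx
        rcases hx with rfl | rfl | rfl
        · exact hu
        · exact hvB
        · exact hnvB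
      have h3 : ({u, v, -v} : Set ℤ).encard = 3 := by
        rw [Set.encard_insert_of_notMem (by simp [Ne.symm hvu, Ne.symm hvnu]; omega),
          Set.encard_pair hvnv]
        rfl
      have := Set.encard_mono hsub
      rw [h3] at this
      have := this.trans hsym
      norm_num at this
    · -- u ≠ -u, use {u, -u, v}
      have hsub : ({u, -u, v} : Set ℤ) ⊆ B := by
        intro x hx
        rcases hx with rfl | rfl | rfl
        · exact hu
        · exact hnuB
        · exact hvB
      have h3 : ({u, -u, v} : Set ℤ).encard = 3 := by
        rw [Set.encard_insert_of_notMem (by simp [hu0, Ne.symm hvu]),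
          Set.encard_pair (fun hc => hvnu hc.symm)]
        rfl
      have := Set.encard_mono hsub
      rw [h3] at this
      have := this.trans hsym
      norm_num at this
  · refine ⟨0, fun x hx1 hx2 => absurd ((hmem x).2 ⟨hx1, hx2⟩) ?_⟩
    intro hxB
    exact hne ⟨x, hxB⟩

/-- If A satisfies property P(h) and the cardinality of A ∩ (-A) is at most 2, then A is a
B_h-set. -/
theorem statement2 (h : ℕ) (A : Set ℤ) (hh : 2 ≤ h) (hA : PropertyP A h)
    (hsym : Set.encard (A ∩ (-A)) ≤ 2) : IsBhSet A h := by
  intro s t hcs hct hsA htA hsum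
  obtain ⟨u, hu⟩ := exists_u A hsym
  obtain ⟨c, ⟨hc, hall⟩, -⟩ := hA s.sum ⟨s, hcs, hsA, rfl⟩
  obtain ⟨p, hp, hps⟩ := hall s ⟨hcs, hsA, rfl⟩
  obtain ⟨q, hq, hqt⟩ := hall t ⟨hct, htA, hsum.symm⟩
  have hpu : ∀ x ∈ p, x = u ∨ x = -u := fun x hx => hu x (hp x hx).1 (hp x hx).2
  have hqu : ∀ x ∈ q, x = u ∨ x = -u := fun x hx => hu x (hq x hx).1 (hq x hx).2
  have hcards : Multiset.card c + Multiset.card p + Multiset.card p = h := by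
    have := congrArg Multiset.card hps
    simpa [hcs] using this.symm
  have hcardt : Multiset.card c + Multiset.card q + Multiset.card q = h := by
    have := congrArg Multiset.card hqt
    simpa [hct] using this.symm
  have hpq : Multiset.card p = Multiset.card q := by omega
  rw [hps, hqt, add_assoc, add_assoc, pair_eq u p hpu, pair_eq u q hqu, hpq]
end

section
/- Let {λ_n} be a sequence of positive integers with λ_{n+1} ≥ q·λ_n for all n, where q > 2h - 1 (h ≥ 2). Then the set A = {λ_n} ∪ {-λ_n} ∪ {0} satisfies property P(h). -/
namespace Aux6

variable {lam : ℕ → ℤ}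

lemma sum_map_neg (p : Multiset ℤ) : (p.map (fun u => -u)).sum = -p.sum := by
  induction p using Multiset.induction with
  | empty => simp
  | cons a s ih => simp [ih]; ring

lemma reduce (s : Multiset ℤ) : ∃ c p : Multiset ℤ, c ≤ s ∧ p ≤ s ∧
    s = c + p + p.map (fun u => -u) ∧ ∀ x ∈ c, -x ∉ c.erase x := by
  induction s using Multiset.strongInductionOn with
  | ih s IH =>
    by_cases hred : ∀ x ∈ s, -x ∉ s.erase x
    · exact ⟨s, 0, le_rfl, by simp, by simp, hred⟩
    · push_neg at hred
      obtain ⟨x, hx, hnx⟩ := hred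
      set s' := (s.erase x).erase (-x) with hs'
      have h1 : s.erase x < s := Multiset.erase_lt.mpr hx
      have h2 : s' < s := lt_of_le_of_lt (Multiset.erase_le _ _) h1
      obtain ⟨c, p, hc, hp, heq, hcred⟩ := IH s' h2
      refine ⟨c, x ::ₘ p, hc.trans h2.le, ?_, ?_, hcred⟩
      · have h3 : x ::ₘ p ≤ x ::ₘ s.erase x :=
          Multiset.cons_le_cons x (hp.trans ((Multiset.erase_le _ _).trans le_rfl))
        rwa [Multiset.cons_erase hx] at h3
      · have e1 : s = x ::ₘ s.erase x := (Multiset.cons_erase hx).symm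
        have e2 : s.erase x = -x ::ₘ s' := (Multiset.cons_erase hnx).symm
        rw [e1, e2, heq]
        simp only [Multiset.map_cons, ← Multiset.singleton_add, Multiset.map_add,
          Multiset.map_singleton]
        simp only [add_assoc, add_comm, add_left_comm]



def ee (lam : ℕ → ℤ) (s : Multiset ℤ) (n : ℕ) : ℤ :=
  (s.count (lam n) : ℤ) - (s.count (-lam n) : ℤ)

lemma exists_cover (s : Multiset ℤ)
    (hs : ∀ x ∈ s, x = 0 ∨ ∃ n, x = lam n ∨ x = -lam n) :
    ∃ T : Finset ℕ, ∀ x ∈ s, x = 0 ∨ ∃ n ∈ T, x = lam n ∨ x = -lam n := by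
  induction s using Multiset.induction with
  | empty => exact ⟨∅, by simp⟩
  | cons a s ih =>
    obtain ⟨T, hT⟩ := ih (fun x hx => hs x (Multiset.mem_cons_of_mem hx))
    rcases hs a (Multiset.mem_cons_self a s) with h0 | ⟨n, hn⟩
    · refine ⟨T, fun x hx => ?_⟩
      rcases Multiset.mem_cons.mp hx with rfl | hx
      · exact Or.inl h0
      · exact hT x hx
    · refine ⟨insert n T, fun x hx => ?_⟩
      rcases Multiset.mem_cons.mp hx with rfl | hx
      · exact Or.inr ⟨n, Finset.mem_insert_self n T, hn⟩
      · rcases hT x hx with h0 | ⟨m, hm, hx'⟩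
        · exact Or.inl h0
        · exact Or.inr ⟨m, Finset.mem_insert_of_mem hm, hx'⟩

lemma sum_eq (hsm : StrictMono lam) (hpos : ∀ n, 0 < lam n) (T : Finset ℕ)
    (s : Multiset ℤ) (hcov : ∀ x ∈ s, x = 0 ∨ ∃ n ∈ T, x = lam n ∨ x = -lam n) :
    s.sum = ∑ n ∈ T, ee lam s n * lam n := by
  induction s using Multiset.induction with
  | empty => simp [ee]
  | cons a s ih =>
    have hs := ih (fun x hx => hcov x (Multiset.mem_cons_of_mem hx))
    rcases hcov a (Multiset.mem_cons_self a s) with rfl | ⟨m, hm, rfl | rfl⟩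
    · rw [Multiset.sum_cons, hs, zero_add]
      apply Finset.sum_congr rfl
      intro n _
      have h1 : lam n ≠ 0 := (hpos n).ne'
      have h2 : -lam n ≠ 0 := by simpa using h1
      simp [ee, Multiset.count_cons, h1, h2]
    · have key : ∀ n ∈ T, ee lam (lam m ::ₘ s) n = ee lam s n + if n = m then 1 else 0 := by
        intro n _
        have h2 : ¬(-lam n = lam m) := by
          have := hpos n; have := hpos m; intro hcontra; omega
        rcases eq_or_ne n m with rfl | hne
        · simp [ee, Multiset.count_cons, h2]; omega
        · have h1 : lam n ≠ lam m := fun hcontra => hne (hsm.injective hcontra)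
          simp [ee, Multiset.count_cons, h1, h2, hne]
      have hcongr : ∑ n ∈ T, ee lam (lam m ::ₘ s) n * lam n
          = ∑ n ∈ T, (ee lam s n + if n = m then 1 else 0) * lam n :=
        Finset.sum_congr rfl (fun n hn => by rw [key n hn])
      rw [Multiset.sum_cons, hs, hcongr]
      simp only [add_mul, Finset.sum_add_distrib, ite_mul, one_mul, zero_mul]
      rw [Finset.sum_ite_eq' T m (fun n => lam n), if_pos hm]
      ring
    · have key : ∀ n ∈ T, ee lam (-lam m ::ₘ s) n = ee lam s n - if n = m then 1 else 0 := by
        intro n _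
        have h2 : ¬(lam n = -lam m) := by
          have := hpos n; have := hpos m; intro hcontra; omega
        rcases eq_or_ne n m with rfl | hne
        · simp [ee, Multiset.count_cons, h2]; omega
        · have h1 : -lam n ≠ -lam m := by
            simpa using fun hcontra => hne (hsm.injective hcontra)
          simp [ee, Multiset.count_cons, h1, h2, hne]
      have hcongr : ∑ n ∈ T, ee lam (-lam m ::ₘ s) n * lam n
          = ∑ n ∈ T, (ee lam s n - if n = m then 1 else 0) * lam n :=
        Finset.sum_congr rfl (fun n hn => by rw [key n hn])
      rw [Multiset.sum_cons, hs, hcongr]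
      simp only [sub_mul, Finset.sum_sub_distrib, ite_mul, one_mul, zero_mul]
      rw [Finset.sum_ite_eq' T m (fun n => lam n), if_pos hm]
      ring

lemma card_eq (hsm : StrictMono lam) (hpos : ∀ n, 0 < lam n) (T : Finset ℕ)
    (s : Multiset ℤ) (hcov : ∀ x ∈ s, x = 0 ∨ ∃ n ∈ T, x = lam n ∨ x = -lam n) :
    Multiset.card s = s.count 0 + ∑ n ∈ T, (s.count (lam n) + s.count (-lam n)) := by
  induction s using Multiset.induction with
  | empty => simp
  | cons a s ih =>
    have hs := ih (fun x hx => hcov x (Multiset.mem_cons_of_mem hx))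
    rcases hcov a (Multiset.mem_cons_self a s) with rfl | ⟨m, hm, rfl | rfl⟩
    · have hcongr : ∑ n ∈ T, (((0:ℤ) ::ₘ s).count (lam n) + ((0:ℤ) ::ₘ s).count (-lam n))
          = ∑ n ∈ T, (s.count (lam n) + s.count (-lam n)) := by
        apply Finset.sum_congr rfl
        intro n _
        have h1 : lam n ≠ 0 := (hpos n).ne'
        have h2 : -lam n ≠ 0 := by simpa using h1
        simp [Multiset.count_cons, h1, h2]
      rw [Multiset.card_cons, hs, hcongr]
      simp [Multiset.count_cons]
      omega
    · have key : ∀ n ∈ T, (lam m ::ₘ s).count (lam n) + (lam m ::ₘ s).count (-lam n)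
          = s.count (lam n) + s.count (-lam n) + if n = m then 1 else 0 := by
        intro n _
        have h2 : ¬(-lam n = lam m) := by
          have := hpos n; have := hpos m; intro hcontra; omega
        rcases eq_or_ne n m with rfl | hne
        · simp [Multiset.count_cons, h2]; omega
        · have h1 : lam n ≠ lam m := fun hcontra => hne (hsm.injective hcontra)
          simp [Multiset.count_cons, h1, h2, hne]
      have hcongr : ∑ n ∈ T, ((lam m ::ₘ s).count (lam n) + (lam m ::ₘ s).count (-lam n))
          = (∑ n ∈ T, (s.count (lam n) + s.count (-lam n)))
            + ∑ n ∈ T, (if n = m then 1 else 0) := by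
        rw [← Finset.sum_add_distrib]
        exact Finset.sum_congr rfl (fun n hn => key n hn)
      have h0 : (lam m : ℤ) ≠ 0 := (hpos m).ne'
      have hz : ((lam m) ::ₘ s).count 0 = s.count 0 := by
        simp [Multiset.count_cons, h0.symm]
      rw [Multiset.card_cons, hs, hcongr, hz,
        Finset.sum_ite_eq' T m (fun _ => 1), if_pos hm]
      omega
    · have key : ∀ n ∈ T, (-lam m ::ₘ s).count (lam n) + (-lam m ::ₘ s).count (-lam n)
          = s.count (lam n) + s.count (-lam n) + if n = m then 1 else 0 := by
        intro n _
        have h2 : ¬(lam n = -lam m) := by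
          have := hpos n; have := hpos m; intro hcontra; omega
        rcases eq_or_ne n m with rfl | hne
        · simp [Multiset.count_cons, h2]; omega
        · have h1 : -lam n ≠ -lam m := by
            simpa using fun hcontra => hne (hsm.injective hcontra)
          simp [Multiset.count_cons, h1, h2, hne]
      have hcongr : ∑ n ∈ T, ((-lam m ::ₘ s).count (lam n) + (-lam m ::ₘ s).count (-lam n))
          = (∑ n ∈ T, (s.count (lam n) + s.count (-lam n)))
            + ∑ n ∈ T, (if n = m then 1 else 0) := by
        rw [← Finset.sum_add_distrib]
        exact Finset.sum_congr rfl (fun n hn => key n hn)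
      have h0 : (0:ℤ) ≠ -lam m := by have := hpos m; omega
      have hz : ((-lam m) ::ₘ s).count 0 = s.count 0 := by
        simp [Multiset.count_cons, h0]
      rw [Multiset.card_cons, hs, hcongr, hz,
        Finset.sum_ite_eq' T m (fun _ => 1), if_pos hm]
      omega


lemma indep (h : ℕ) (q : ℝ) (lam : ℕ → ℤ) (hh : 2 ≤ h)
    (hq : (2 * h - 1 : ℝ) < q) (hpos : ∀ n, 0 < lam n)
    (hlac : ∀ n, q * (lam n : ℝ) ≤ (lam (n + 1) : ℝ))
    (hmono : ∀ m n : ℕ, m ≤ n → lam m ≤ lam n)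
    (T : Finset ℕ) (f : ℕ → ℤ)
    (hsum : ∑ n ∈ T, f n * lam n = 0)
    (hbd : ∑ n ∈ T, |f n| ≤ 2 * h) :
    ∀ n ∈ T, f n = 0 := by
  by_contra hcon
  push_neg at hcon
  obtain ⟨n₀, hn₀T, hn₀⟩ := hcon
  set S := T.filter (fun n => f n ≠ 0) with hS
  have hSne : S.Nonempty := ⟨n₀, Finset.mem_filter.mpr ⟨hn₀T, hn₀⟩⟩
  set N := S.max' hSne with hN
  have hNS : N ∈ S := S.max'_mem hSne
  have hNT : N ∈ T := (Finset.mem_filter.mp hNS).1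
  have hfN : f N ≠ 0 := (Finset.mem_filter.mp hNS).2
  have hq1 : (1:ℝ) < q := by
    have : (2:ℝ) ≤ (h:ℝ) := by exact_mod_cast hh
    linarith
  have hq0 : (0:ℝ) < q := by linarith
  -- restrict sum to S
  have hsumS : ∑ n ∈ S, f n * lam n = 0 := by
    rw [← hsum]
    apply Finset.sum_filter_of_ne
    intro x _ hx hfx
    exact hx (by simp [hfx])
  have hbdS : ∑ n ∈ S, |f n| ≤ 2 * h := by
    refine le_trans (Finset.sum_le_sum_of_subset_of_nonneg (Finset.filter_subset _ _)
      (fun i _ _ => abs_nonneg _)) hbd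
  have hsplit : f N * lam N + ∑ n ∈ S.erase N, f n * lam n = 0 := by
    rw [Finset.add_sum_erase S (fun n => f n * lam n) hNS]; exact hsumS
  have hbd' : |f N| + ∑ n ∈ S.erase N, |f n| ≤ 2 * h := by
    rw [Finset.add_sum_erase S (fun n => |f n|) hNS]; exact hbdS
  -- real versions
  have hLpos : ∀ n, (0:ℝ) < (lam n : ℝ) := fun n => by exact_mod_cast hpos n
  have hstep : ∀ n ∈ S.erase N, q * (lam n : ℝ) ≤ (lam N : ℝ) := by
    intro n hn
    have hnS : n ∈ S := Finset.mem_of_mem_erase hn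
    have hne : n ≠ N := Finset.ne_of_mem_erase hn
    have hle : n ≤ N := Finset.le_max' S n hnS
    have hlt : n < N := lt_of_le_of_ne hle hne
    calc q * (lam n : ℝ) ≤ (lam (n+1) : ℝ) := hlac n
      _ ≤ (lam N : ℝ) := by exact_mod_cast hmono (n+1) N hlt
  -- main chain
  have habs : |(f N : ℝ)| * (lam N : ℝ) ≤ ∑ n ∈ S.erase N, |(f n : ℝ)| * (lam n : ℝ) := by
    have h1 : (f N : ℝ) * (lam N : ℝ) = -∑ n ∈ S.erase N, (f n : ℝ) * (lam n : ℝ) := by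
      have := hsplit
      have h2 : ((∑ n ∈ S.erase N, f n * lam n : ℤ) : ℝ)
          = ∑ n ∈ S.erase N, (f n : ℝ) * (lam n : ℝ) := by push_cast; ring_nf
      have h3 : ((f N * lam N : ℤ) : ℝ) = (f N : ℝ) * (lam N : ℝ) := by push_cast; ring
      have h4 : (f N : ℝ) * lam N + ∑ n ∈ S.erase N, (f n : ℝ) * lam n = 0 := by
        rw [← h3, ← h2, ← Int.cast_add, hsplit, Int.cast_zero]
      linarith
    calc |(f N : ℝ)| * (lam N : ℝ) = |(f N : ℝ) * (lam N : ℝ)| := by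
          rw [abs_mul, abs_of_pos (hLpos N)]
      _ = |∑ n ∈ S.erase N, (f n : ℝ) * (lam n : ℝ)| := by rw [h1, abs_neg]
      _ ≤ ∑ n ∈ S.erase N, |(f n : ℝ) * (lam n : ℝ)| := Finset.abs_sum_le_sum_abs _ _
      _ = ∑ n ∈ S.erase N, |(f n : ℝ)| * (lam n : ℝ) := by
          apply Finset.sum_congr rfl
          intro n _
          rw [abs_mul, abs_of_pos (hLpos n)]
  have hstep2 : ∑ n ∈ S.erase N, q * (|(f n : ℝ)| * (lam n : ℝ))
      ≤ (∑ n ∈ S.erase N, |(f n : ℝ)|) * (lam N : ℝ) := by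
    rw [Finset.sum_mul]
    apply Finset.sum_le_sum
    intro n hn
    have := hstep n hn
    have hfa : (0:ℝ) ≤ |(f n : ℝ)| := abs_nonneg _
    nlinarith
  have h1fN : (1:ℝ) ≤ |(f N : ℝ)| := by
    have : (1:ℤ) ≤ |f N| := Int.one_le_abs (by omega)
    calc (1:ℝ) ≤ ((|f N| : ℤ) : ℝ) := by exact_mod_cast this
      _ = |(f N : ℝ)| := by push_cast; ring
  have hrem : ∑ n ∈ S.erase N, |(f n : ℝ)| ≤ 2 * h - |(f N : ℝ)| := by
    have : ((|f N| + ∑ n ∈ S.erase N, |f n| : ℤ) : ℝ) ≤ ((2 * h : ℤ) : ℝ) := by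
      exact_mod_cast hbd'
    push_cast at this
    linarith
  have hfinal : q * (lam N : ℝ) < q * (lam N : ℝ) := by
    calc q * (lam N : ℝ) ≤ q * (|(f N : ℝ)| * (lam N : ℝ)) := by
          nlinarith [mul_nonneg (mul_pos hq0 (hLpos N)).le (sub_nonneg.mpr h1fN)]
      _ ≤ q * ∑ n ∈ S.erase N, |(f n : ℝ)| * (lam n : ℝ) := by
          apply mul_le_mul_of_nonneg_left habs (le_of_lt hq0)
      _ = ∑ n ∈ S.erase N, q * (|(f n : ℝ)| * (lam n : ℝ)) := Finset.mul_sum _ _ _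
      _ ≤ (∑ n ∈ S.erase N, |(f n : ℝ)|) * (lam N : ℝ) := hstep2
      _ ≤ (2 * h - |(f N : ℝ)|) * (lam N : ℝ) := by
          apply mul_le_mul_of_nonneg_right hrem (le_of_lt (hLpos N))
      _ ≤ (2 * h - 1) * (lam N : ℝ) :=
          mul_le_mul_of_nonneg_right (by linarith) (hLpos N).le
      _ < q * (lam N : ℝ) := mul_lt_mul_of_pos_right hq (hLpos N)
  exact lt_irrefl _ hfinal


lemma reduced_not_both (hpos : ∀ n, 0 < lam n) (c : Multiset ℤ)
    (hred : ∀ x ∈ c, -x ∉ c.erase x) (n : ℕ) :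
    c.count (lam n) = 0 ∨ c.count (-lam n) = 0 := by
  by_contra hcon
  push_neg at hcon
  obtain ⟨h1, h2⟩ := hcon
  have hm1 : lam n ∈ c := Multiset.count_pos.mp (Nat.pos_of_ne_zero h1)
  have hne : -lam n ≠ lam n := by have := hpos n; omega
  have hm2 : -lam n ∈ c.erase (lam n) := by
    rw [← Multiset.count_pos, Multiset.count_erase_of_ne hne]
    exact Nat.pos_of_ne_zero h2
  exact hred (lam n) hm1 hm2

lemma reduced_zero_le_one (c : Multiset ℤ)
    (hred : ∀ x ∈ c, -x ∉ c.erase x) : c.count 0 ≤ 1 := by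
  by_contra hcon
  push_neg at hcon
  have h0 : (0:ℤ) ∈ c := Multiset.count_pos.mp (by omega)
  have h1 : (0:ℤ) ∈ c.erase 0 := by
    rw [← Multiset.count_pos, Multiset.count_erase_self]
    omega
  have := hred 0 h0
  rw [neg_zero] at this
  exact this h1

lemma unique_core (h : ℕ) (q : ℝ) (hh : 2 ≤ h)
    (hq : (2 * h - 1 : ℝ) < q) (hpos : ∀ n, 0 < lam n)
    (hlac : ∀ n, q * (lam n : ℝ) ≤ (lam (n + 1) : ℝ))
    (hsm : StrictMono lam)
    (c c' : Multiset ℤ)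
    (hcov : ∀ x ∈ c, x = 0 ∨ ∃ n, x = lam n ∨ x = -lam n)
    (hcov' : ∀ x ∈ c', x = 0 ∨ ∃ n, x = lam n ∨ x = -lam n)
    (hred : ∀ x ∈ c, -x ∉ c.erase x) (hred' : ∀ x ∈ c', -x ∉ c'.erase x)
    (hcard : Multiset.card c ≤ h) (hcard' : Multiset.card c' ≤ h)
    (hpar : Multiset.card c % 2 = Multiset.card c' % 2)
    (hsum : c.sum = c'.sum) : c = c' := by
  have hmono : ∀ m n : ℕ, m ≤ n → lam m ≤ lam n := fun m n hmn => (hsm.le_iff_le).mpr hmn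
  obtain ⟨T, hT⟩ := exists_cover (c + c') (by
    intro x hx
    rcases Multiset.mem_add.mp hx with hx | hx
    · exact hcov x hx
    · exact hcov' x hx)
  have hTc : ∀ x ∈ c, x = 0 ∨ ∃ n ∈ T, x = lam n ∨ x = -lam n :=
    fun x hx => hT x (Multiset.mem_add.mpr (Or.inl hx))
  have hTc' : ∀ x ∈ c', x = 0 ∨ ∃ n ∈ T, x = lam n ∨ x = -lam n :=
    fun x hx => hT x (Multiset.mem_add.mpr (Or.inr hx))
  -- the sums
  have hsc : c.sum = ∑ n ∈ T, ee lam c n * lam n := sum_eq hsm hpos T c hTc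
  have hsc' : c'.sum = ∑ n ∈ T, ee lam c' n * lam n := sum_eq hsm hpos T c' hTc'
  have hkc : Multiset.card c = c.count 0 + ∑ n ∈ T, (c.count (lam n) + c.count (-lam n)) :=
    card_eq hsm hpos T c hTc
  have hkc' : Multiset.card c' = c'.count 0 + ∑ n ∈ T, (c'.count (lam n) + c'.count (-lam n)) :=
    card_eq hsm hpos T c' hTc'
  -- the difference function
  set f : ℕ → ℤ := fun n => ee lam c n - ee lam c' n with hf
  have hfsum : ∑ n ∈ T, f n * lam n = 0 := by
    simp only [hf, sub_mul, Finset.sum_sub_distrib]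
    rw [← hsc, ← hsc', hsum, sub_self]
  have hbdc : ∑ n ∈ T, |ee lam c n| ≤ (Multiset.card c : ℤ) := by
    calc ∑ n ∈ T, |ee lam c n|
        ≤ ∑ n ∈ T, ((c.count (lam n) : ℤ) + (c.count (-lam n) : ℤ)) := by
          apply Finset.sum_le_sum
          intro n _
          rw [ee, abs_sub_comm]
          refine le_trans (abs_sub _ _) ?_
          simp [add_comm]
      _ ≤ (Multiset.card c : ℤ) := by
          rw [hkc]
          push_cast
          simp [Finset.sum_add_distrib]
  have hbdc' : ∑ n ∈ T, |ee lam c' n| ≤ (Multiset.card c' : ℤ) := by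
    calc ∑ n ∈ T, |ee lam c' n|
        ≤ ∑ n ∈ T, ((c'.count (lam n) : ℤ) + (c'.count (-lam n) : ℤ)) := by
          apply Finset.sum_le_sum
          intro n _
          rw [ee, abs_sub_comm]
          refine le_trans (abs_sub _ _) ?_
          simp [add_comm]
      _ ≤ (Multiset.card c' : ℤ) := by
          rw [hkc']
          push_cast
          simp [Finset.sum_add_distrib]
  have hfbd : ∑ n ∈ T, |f n| ≤ 2 * h := by
    calc ∑ n ∈ T, |f n| ≤ ∑ n ∈ T, (|ee lam c n| + |ee lam c' n|) := by
          apply Finset.sum_le_sum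
          intro n _
          exact abs_sub _ _
      _ = ∑ n ∈ T, |ee lam c n| + ∑ n ∈ T, |ee lam c' n| := Finset.sum_add_distrib
      _ ≤ (Multiset.card c : ℤ) + (Multiset.card c' : ℤ) := add_le_add hbdc hbdc'
      _ ≤ 2 * h := by
          have h1 : (Multiset.card c : ℤ) ≤ h := by exact_mod_cast hcard
          have h2 : (Multiset.card c' : ℤ) ≤ h := by exact_mod_cast hcard'
          omega
  have hfzero : ∀ n ∈ T, f n = 0 := indep h q lam hh hq hpos hlac hmono T f hfsum hfbd
  -- counts are equal at ±lam n for n ∈ T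
  have hcnt : ∀ n ∈ T, c.count (lam n) = c'.count (lam n) ∧
      c.count (-lam n) = c'.count (-lam n) := by
    intro n hn
    have h1 := reduced_not_both hpos c hred n
    have h2 := reduced_not_both hpos c' hred' n
    have h3 : ee lam c n = ee lam c' n := by
      have := hfzero n hn
      simp only [hf] at this
      omega
    simp only [ee] at h3
    omega
  -- zero counts equal
  have hzt : ∑ n ∈ T, (c.count (lam n) + c.count (-lam n))
      = ∑ n ∈ T, (c'.count (lam n) + c'.count (-lam n)) := by
    apply Finset.sum_congr rfl
    intro n hn
    obtain ⟨e1, e2⟩ := hcnt n hn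
    omega
  have hz : c.count 0 = c'.count 0 := by
    have z1 := reduced_zero_le_one c hred
    have z2 := reduced_zero_le_one c' hred'
    omega
  -- extensionality
  ext a
  by_cases hac : a ∈ c
  · rcases hTc a hac with rfl | ⟨n, hn, rfl | rfl⟩
    · exact hz
    · exact (hcnt n hn).1
    · exact (hcnt n hn).2
  · by_cases hac' : a ∈ c'
    · rcases hTc' a hac' with rfl | ⟨n, hn, rfl | rfl⟩
      · exact hz
      · exact (hcnt n hn).1
      · exact (hcnt n hn).2
    · rw [Multiset.count_eq_zero_of_notMem hac, Multiset.count_eq_zero_of_notMem hac']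


end Aux6

open Aux6 in
/-- A lacunary sequence of positive integers with ratio q > 2h - 1, together with its
negatives and 0, satisfies property P(h). -/
theorem statement6 (h : ℕ) (q : ℝ) (lam : ℕ → ℤ) (hh : 2 ≤ h)
    (hq : (2 * h - 1 : ℝ) < q) (hpos : ∀ n, 0 < lam n)
    (hlac : ∀ n, q * (lam n : ℝ) ≤ (lam (n + 1) : ℝ)) :
    PropertyP ({x : ℤ | ∃ n, x = lam n} ∪ {x : ℤ | ∃ n, x = -lam n} ∪ {0}) h := by
  set A : Set ℤ := {x : ℤ | ∃ n, x = lam n} ∪ {x : ℤ | ∃ n, x = -lam n} ∪ {0} with hA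
  have hq1 : (1:ℝ) < q := by
    have : (2:ℝ) ≤ (h:ℝ) := by exact_mod_cast hh
    linarith
  have hsm : StrictMono lam := by
    apply strictMono_nat_of_lt_succ
    intro n
    have h1 : (lam n : ℝ) < q * (lam n : ℝ) := by
      have := hpos n
      have hl : (0:ℝ) < (lam n : ℝ) := by exact_mod_cast this
      nlinarith
    have h2 : (lam n : ℝ) < (lam (n+1) : ℝ) := lt_of_lt_of_le h1 (hlac n)
    exact_mod_cast h2
  have hmemA : ∀ x : ℤ, x ∈ A ↔ (x = 0 ∨ ∃ n, x = lam n ∨ x = -lam n) := by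
    intro x
    simp only [hA, Set.mem_union, Set.mem_setOf_eq, Set.mem_singleton_iff]
    constructor
    · rintro ((⟨n, hn⟩ | ⟨n, hn⟩) | h0)
      · exact Or.inr ⟨n, Or.inl hn⟩
      · exact Or.inr ⟨n, Or.inr hn⟩
      · exact Or.inl h0
    · rintro (h0 | ⟨n, hn | hn⟩)
      · exact Or.inr h0
      · exact Or.inl (Or.inl ⟨n, hn⟩)
      · exact Or.inl (Or.inr ⟨n, hn⟩)
  have hAsym : ∀ x : ℤ, x ∈ A → -x ∈ A := by
    intro x hx
    rw [hmemA] at hx ⊢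
    rcases hx with rfl | ⟨n, rfl | rfl⟩
    · simp
    · exact Or.inr ⟨n, Or.inr rfl⟩
    · exact Or.inr ⟨n, Or.inl (by simp)⟩
  intro D hD
  obtain ⟨s₀, hs₀⟩ := hD
  -- a "canonical decomposition" for any representation
  have main : ∀ s : Multiset ℤ, IsRep A h D s →
      ∃ c p : Multiset ℤ, IsCore A h c ∧ c.sum = D ∧
        (∀ u ∈ p, u ∈ A ∧ -u ∈ A) ∧ s = c + p + p.map (fun u => -u) := by
    intro s hs
    obtain ⟨hcard, hmem, hsum⟩ := hs
    obtain ⟨c, p, hcle, hple, heq, hred⟩ := reduce s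
    have hcards : Multiset.card s = Multiset.card c + 2 * Multiset.card p := by
      rw [heq]
      simp only [Multiset.card_add, Multiset.card_map]
      ring
    have hcmem : ∀ x ∈ c, x ∈ A := fun x hx => hmem x (Multiset.mem_of_le hcle hx)
    have hpmem : ∀ u ∈ p, u ∈ A ∧ -u ∈ A := by
      intro u hu
      have h1 : u ∈ A := hmem u (Multiset.mem_of_le hple hu)
      exact ⟨h1, hAsym u h1⟩
    have hcsum : c.sum = D := by
      have h1 := congrArg Multiset.sum heq
      rw [Multiset.sum_add, Multiset.sum_add, sum_map_neg] at h1
      omega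
    refine ⟨c, p, ⟨by omega, by omega, hcmem, hred⟩, hcsum, hpmem, heq⟩
  obtain ⟨c₀, p₀, hcore₀, hsum₀, hp₀, heq₀⟩ := main s₀ hs₀
  -- any core with sum D equals c₀
  have huniq : ∀ c : Multiset ℤ, IsCore A h c → c.sum = D → c = c₀ := by
    intro c hc hcs
    obtain ⟨hcard, hpar, hmem, hred⟩ := hc
    obtain ⟨hcard₀, hpar₀, hmem₀, hred₀⟩ := hcore₀
    exact unique_core h q hh hq hpos hlac hsm c c₀
      (fun x hx => (hmemA x).mp (hmem x hx))
      (fun x hx => (hmemA x).mp (hmem₀ x hx))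
      hred hred₀ hcard hcard₀ (by omega) (by rw [hcs, hsum₀])
  refine ⟨c₀, ⟨⟨hcore₀.1, hcore₀.2.1, hcore₀.2.2.1, hcore₀.2.2.2⟩, ?_⟩, ?_⟩
  · intro s hs
    obtain ⟨c, p, hcore, hcsum, hp, heq⟩ := main s hs
    have : c = c₀ := huniq c hcore hcsum
    exact ⟨p, hp, by rw [← this]; exact heq⟩
  · rintro c' ⟨hc'core, hall⟩
    obtain ⟨p, hp, heq⟩ := hall s₀ hs₀
    have hc'sum : c'.sum = D := by
      have h1 := congrArg Multiset.sum heq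
      rw [Multiset.sum_add, Multiset.sum_add, sum_map_neg] at h1
      have h2 := hs₀.2.2
      omega
    exact huniq c' hc'core hc'sum
end

section
/- For integers q ≥ 2h with h ≥ 2, the set S_q = {±q^n : n ≥ 0} ∪ {0} satisfies property P(h). -/
/-- The last condition of `IsCore`. Since `-0 = 0`, it allows `0` at most once. -/
def NoCancellingPair (c : Multiset ℤ) : Prop :=
  ∀ x ∈ c, -x ∉ c.erase x

namespace NoCancellingPair

variable {c d : Multiset ℤ}

theorem mono (hdc : d ≤ c) (hc : NoCancellingPair c) : NoCancellingPair d :=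
  fun x hx hmem => hc x (Multiset.mem_of_le hdc hx)
    (Multiset.mem_of_le (Multiset.erase_le_erase x hdc) hmem)

theorem count_eq_zero_or (hc : NoCancellingPair c) {t : ℤ} (ht : t ≠ 0) :
    c.count t = 0 ∨ c.count (-t) = 0 := by
  by_contra! hpos
  have hne : -t ≠ t := fun h => ht (by linarith)
  exact hc t (Multiset.count_ne_zero.mp hpos.1)
    ((Multiset.mem_erase_of_ne hne).mpr (Multiset.count_ne_zero.mp hpos.2))

theorem card_le_one_of_forall_eq_zero (hc : NoCancellingPair c) (h0 : ∀ x ∈ c, x = 0) :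
    Multiset.card c ≤ 1 := by
  by_contra! hcard
  have hrep : c = Multiset.replicate (Multiset.card c) 0 := Multiset.eq_replicate_card.mpr h0
  obtain ⟨k, hk⟩ : ∃ k, Multiset.card c = k + 2 := ⟨Multiset.card c - 2, by omega⟩
  rw [hk] at hrep
  apply hc 0 (by rw [hrep]; simp)
  rw [hrep]
  simp [Multiset.replicate_succ]

end NoCancellingPair

theorem exists_noCancellingPair_decomposition (s : Multiset ℤ) :
    ∃ c p : Multiset ℤ, c ≤ s ∧ p ≤ s ∧ NoCancellingPair c ∧
      s = c + p + p.map (fun u => -u) := by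
  induction s using Multiset.strongInductionOn with
  | ih s ih =>
    by_cases hpair : NoCancellingPair s
    · exact ⟨s, 0, le_rfl, Multiset.zero_le s, hpair, by simp⟩
    · simp only [NoCancellingPair, not_forall, not_not] at hpair
      obtain ⟨x, hx, hnx⟩ := hpair
      have hsx : s = x ::ₘ (-x) ::ₘ (s.erase x).erase (-x) := by
        rw [Multiset.cons_erase hnx, Multiset.cons_erase hx]
      have hlt : (s.erase x).erase (-x) < s :=
        (Multiset.erase_le _ _).trans_lt (Multiset.erase_lt.mpr hx)
      obtain ⟨c, p, hcs, hps, hc, hdec⟩ := ih _ hlt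
      refine ⟨c, x ::ₘ p, hcs.trans hlt.le, ?_, hc, ?_⟩
      · rw [← Multiset.cons_erase hx]
        exact Multiset.cons_le_cons x (hps.trans (Multiset.erase_le _ _))
      · rw [hsx, hdec, Multiset.map_cons]
        simp only [← Multiset.singleton_add]
        abel

theorem sum_add_add_map_neg (c p : Multiset ℤ) :
    (c + p + p.map (fun u => -u)).sum = c.sum := by
  rw [Multiset.sum_add, Multiset.sum_add, Multiset.sum_map_neg, Multiset.map_id']
  abel

section PropertyP

variable {A : Set ℤ} {h : ℕ}

theorem exists_isCore_of_isRep {D : ℤ} {s : Multiset ℤ} (hs : IsRep A h D s) :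
    ∃ c p : Multiset ℤ, IsCore A h c ∧ c.sum = D ∧ p ≤ s ∧
      s = c + p + p.map (fun u => -u) := by
  obtain ⟨hcard, hmem, hsum⟩ := hs
  obtain ⟨c, p, hcs, hps, hc, rfl⟩ := exists_noCancellingPair_decomposition s
  simp only [Multiset.card_add, Multiset.card_map] at hcard
  refine ⟨c, p, ⟨by omega, by omega, fun x hx => hmem x (Multiset.mem_of_le hcs hx), hc⟩,
    ?_, hps, rfl⟩
  rwa [sum_add_add_map_neg] at hsum

theorem propertyP_of_core_eq_of_sum_eq (hA : ∀ x ∈ A, -x ∈ A)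
    (hcore : ∀ c c', IsCore A h c → IsCore A h c' → c.sum = c'.sum → c = c') :
    PropertyP A h := by
  rintro D ⟨s₀, hs₀⟩
  obtain ⟨c₀, -, hc₀, hc₀D, -, -⟩ := exists_isCore_of_isRep hs₀
  refine ⟨c₀, ⟨hc₀, fun s hs => ?_⟩, fun c ⟨hc, hmatch⟩ => hcore c c₀ hc hc₀ ?_⟩
  · obtain ⟨c, p, hc, hcD, hps, hdec⟩ := exists_isCore_of_isRep hs
    refine ⟨p, fun u hu => ?_, by rw [hdec, hcore c c₀ hc hc₀ (hcD.trans hc₀D.symm)]⟩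
    have huA := hs.2.1 u (Multiset.mem_of_le hps hu)
    exact ⟨huA, hA u huA⟩
  · obtain ⟨p, -, hdec⟩ := hmatch s₀ hs₀
    rw [hc₀D, ← hs₀.2.2, hdec, sum_add_add_map_neg]

end PropertyP

theorem dvd_sum_sub_mul_count_sub_count {d t : ℤ} (ht : t ≠ 0) {c : Multiset ℤ}
    (hc : ∀ x ∈ c, x = t ∨ x = -t ∨ d ∣ x) :
    d ∣ c.sum - t * (c.count t - c.count (-t)) := by
  have hne : t ≠ -t := fun h => ht (by linarith)
  induction c using Multiset.induction with
  | empty => simp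
  | cons x c ih =>
    rw [Multiset.forall_mem_cons] at hc
    obtain ⟨k, hk⟩ := ih hc.2
    simp only [Multiset.sum_cons, Multiset.count_cons]
    split_ifs with hxt hxnt hxnt
    · exact absurd (hxt.trans hxnt.symm) hne
    · exact ⟨k, by subst hxt; push_cast; linarith⟩
    · exact ⟨k, by rw [← hxnt]; push_cast; linarith⟩
    · obtain ⟨j, rfl⟩ := hc.1.resolve_left (Ne.symm hxt) |>.resolve_left (Ne.symm hxnt)
      exact ⟨j + k, by push_cast; linarith⟩

theorem sum_eq_card_mul_of_count_eq_card {c : Multiset ℤ} {t : ℤ}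
    (h : c.count t = Multiset.card c) : c.sum = Multiset.card c * t := by
  rw [Multiset.eq_replicate_card.mpr fun x hx => (Multiset.count_eq_card.mp h x hx).symm]
  simp

/-- The set `S_q` of the statement. -/
def signedPowersWithZero (q : ℤ) : Set ℤ :=
  {x | (∃ n : ℕ, x = q ^ n ∨ x = -(q ^ n)) ∨ x = 0}

theorem neg_mem_signedPowersWithZero {q x : ℤ} (hx : x ∈ signedPowersWithZero q) :
    -x ∈ signedPowersWithZero q := by
  rcases hx with ⟨n, rfl | rfl⟩ | rfl
  · exact .inl ⟨n, .inr rfl⟩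
  · exact .inl ⟨n, .inl (neg_neg _)⟩
  · exact .inr neg_zero

theorem exists_lowest_power {q : ℤ} {s : Multiset ℤ}
    (hs : ∀ x ∈ s, x ∈ signedPowersWithZero q) (hne : ∃ x ∈ s, x ≠ 0) :
    ∃ m : ℕ, q ^ m ≠ 0 ∧ (q ^ m ∈ s ∨ -q ^ m ∈ s) ∧
      ∀ x ∈ s, x = q ^ m ∨ x = -q ^ m ∨ q ^ (m + 1) ∣ x := by
  classical
  have hex : ∃ n : ℕ, ∃ x ∈ s, x ≠ 0 ∧ (x = q ^ n ∨ x = -q ^ n) := by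
    obtain ⟨x, hx, hx0⟩ := hne
    obtain ⟨n, hn⟩ := (hs x hx).resolve_right hx0
    exact ⟨n, x, hx, hx0, hn⟩
  obtain ⟨y, hy, hy0, hym⟩ := Nat.find_spec hex
  refine ⟨Nat.find hex, ?_, by rcases hym with rfl | rfl <;> tauto, fun x hx => ?_⟩
  · rintro h0
    rcases hym with rfl | rfl <;> simp_all
  by_cases hx0 : x = 0
  · exact Or.inr (Or.inr (by rw [hx0]; exact dvd_zero _))
  obtain ⟨n, hn⟩ := (hs x hx).resolve_right hx0
  obtain hlt | rfl | hgt := lt_trichotomy n (Nat.find hex)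
  · exact absurd ⟨x, hx, hx0, hn⟩ (Nat.find_min hex hlt)
  · tauto
  · have hdvd : q ^ (Nat.find hex + 1) ∣ q ^ n := pow_dvd_pow q hgt
    rcases hn with rfl | rfl
    · exact Or.inr (Or.inr hdvd)
    · exact Or.inr (Or.inr hdvd.neg_right)

theorem dvd_count_sub_count_sub_of_sum_eq {q : ℤ} {m : ℕ} (ht : q ^ m ≠ 0)
    {c c' : Multiset ℤ} (hdiv : ∀ x ∈ c + c', x = q ^ m ∨ x = -q ^ m ∨ q ^ (m + 1) ∣ x)
    (hsum : c.sum = c'.sum) :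
    q ∣ (c.count (q ^ m) - c.count (-q ^ m) : ℤ) - (c'.count (q ^ m) - c'.count (-q ^ m)) := by
  have hc := dvd_sum_sub_mul_count_sub_count ht
    fun x hx => hdiv x (Multiset.mem_add.mpr (.inl hx))
  have hc' := dvd_sum_sub_mul_count_sub_count ht
    fun x hx => hdiv x (Multiset.mem_add.mpr (.inr hx))
  rw [← mul_dvd_mul_iff_left ht, ← pow_succ]
  convert dvd_sub hc' hc using 1
  rw [hsum]
  ring

theorem forall_eq_zero_of_disjoint_of_sum_eq {q : ℤ} {h : ℕ} (hq : 2 * h ≤ q)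
    {c c' : Multiset ℤ} (hA : ∀ x ∈ c + c', x ∈ signedPowersWithZero q)
    (hc : NoCancellingPair c) (hc' : NoCancellingPair c')
    (hcard : Multiset.card c ≤ h) (hcard' : Multiset.card c' ≤ h)
    (hdisj : Disjoint c c') (hsum : c.sum = c'.sum) : ∀ x ∈ c + c', x = 0 := by
  by_contra! hne
  obtain ⟨m, ht, hmem, hdiv⟩ := exists_lowest_power hA hne
  have hdigit := dvd_count_sub_count_sub_of_sum_eq ht hdiv hsum
  set t := q ^ m
  have hdisj_count : ∀ x, c.count x = 0 ∨ c'.count x = 0 := fun x => by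
    by_contra! hx
    exact Multiset.disjoint_left.mp hdisj (Multiset.count_ne_zero.mp hx.1)
      (Multiset.count_ne_zero.mp hx.2)
  have := hc.count_eq_zero_or ht
  have := hc'.count_eq_zero_or ht
  have := hdisj_count t
  have := hdisj_count (-t)
  have := Multiset.count_le_card t c
  have := Multiset.count_le_card (-t) c
  have := Multiset.count_le_card t c'
  have := Multiset.count_le_card (-t) c'
  -- `hdigit` compares the signed multiplicities of `±q ^ m` in `c` and `c'`, which are at most
  -- `h ≤ q / 2` in absolute value and, by disjointness, of opposite signs.
  rcases eq_or_ne ((c.count t - c.count (-t) : ℤ) - (c'.count t - c'.count (-t))) 0 with h0 | h0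
  · have hcount : (c + c').count t = 0 ∧ (c + c').count (-t) = 0 := by
      simp only [Multiset.count_add]
      omega
    rcases hmem with hmem | hmem
    · exact Multiset.count_ne_zero.mpr hmem hcount.1
    · exact Multiset.count_ne_zero.mpr hmem hcount.2
  · have hq' := le_abs'.mp (Int.le_of_dvd (abs_pos.mpr h0) ((dvd_abs _ _).mpr hdigit))
    have hext : (c.count t = Multiset.card c ∧ c'.count (-t) = Multiset.card c' ∨
        c.count (-t) = Multiset.card c ∧ c'.count t = Multiset.card c') ∧
        Multiset.card c = Multiset.card c' ∧ 0 < Multiset.card c := by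
      omega
    obtain ⟨hext | hext, hcc, hpos⟩ := hext <;>
    · rw [sum_eq_card_mul_of_count_eq_card hext.1, sum_eq_card_mul_of_count_eq_card hext.2, hcc]
        at hsum
      have hzero : (Multiset.card c' : ℤ) * t = 0 := by linarith
      exact ht ((mul_eq_zero.mp hzero).resolve_left (by omega))

theorem disjoint_tsub_tsub {α : Type*} [DecidableEq α] (c c' : Multiset α) :
    Disjoint (c - c') (c' - c) :=
  Multiset.disjoint_left.mpr fun {x} hx hx' => by
    rw [← Multiset.count_pos, Multiset.count_sub] at hx hx'
    omega

theorem sum_tsub_eq_sum_tsub_of_sum_eq {G : Type*} [AddCommGroup G] [DecidableEq G]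
    {c c' : Multiset G} (hsum : c.sum = c'.sum) : (c - c').sum = (c' - c).sum := by
  have hs := congrArg Multiset.sum (Multiset.sub_add_inter c c')
  have hs' := congrArg Multiset.sum (Multiset.sub_add_inter c' c)
  rw [Multiset.sum_add] at hs hs'
  rw [Multiset.inter_comm] at hs'
  rw [← add_right_cancel_iff (a := (c ∩ c').sum), hs, hs', hsum]

theorem isCore_eq_of_sum_eq {q : ℤ} {h : ℕ} (hq : 2 * h ≤ q) {c c' : Multiset ℤ}
    (hc : IsCore (signedPowersWithZero q) h c) (hc' : IsCore (signedPowersWithZero q) h c')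
    (hsum : c.sum = c'.sum) : c = c' := by
  obtain ⟨hcard, hpar, hA, hnc⟩ := hc
  obtain ⟨hcard', hpar', hA', hnc'⟩ := hc'
  replace hnc : NoCancellingPair c := hnc
  replace hnc' : NoCancellingPair c' := hnc'
  have hdisj := disjoint_tsub_tsub c c'
  have hzero : ∀ x ∈ (c - c') + (c' - c), x = 0 := by
    refine forall_eq_zero_of_disjoint_of_sum_eq hq (fun x hx => ?_) (hnc.mono tsub_le_self)
      (hnc'.mono tsub_le_self) ((Multiset.card_le_card tsub_le_self).trans hcard)
      ((Multiset.card_le_card tsub_le_self).trans hcard') hdisj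
      (sum_tsub_eq_sum_tsub_of_sum_eq hsum)
    rcases Multiset.mem_add.mp hx with hx | hx
    exacts [hA x (Multiset.mem_of_le tsub_le_self hx), hA' x (Multiset.mem_of_le tsub_le_self hx)]
  have hle := (hnc.mono tsub_le_self).card_le_one_of_forall_eq_zero
    fun x hx => hzero x (Multiset.mem_add.mpr (.inl hx))
  have hle' := (hnc'.mono tsub_le_self).card_le_one_of_forall_eq_zero
    fun x hx => hzero x (Multiset.mem_add.mpr (.inr hx))
  have hnot : ¬(Multiset.card (c - c') = 1 ∧ Multiset.card (c' - c) = 1) := by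
    rintro ⟨h1, h1'⟩
    obtain ⟨x, hx⟩ := Multiset.card_eq_one.mp h1
    obtain ⟨y, hy⟩ := Multiset.card_eq_one.mp h1'
    have hx0 : x = 0 := hzero x (by simp [hx])
    have hy0 : y = 0 := hzero y (by simp [hy])
    rw [hx, hy, hx0, hy0] at hdisj
    simp at hdisj
  have hcd := congrArg Multiset.card (Multiset.sub_add_inter c c')
  have hcd' := congrArg Multiset.card (Multiset.sub_add_inter c' c)
  rw [Multiset.card_add] at hcd hcd'
  rw [Multiset.inter_comm] at hcd'
  have h0 : Multiset.card (c - c') = 0 ∧ Multiset.card (c' - c) = 0 := by omega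
  exact le_antisymm (tsub_eq_zero_iff_le.mp (Multiset.card_eq_zero.mp h0.1))
    (tsub_eq_zero_iff_le.mp (Multiset.card_eq_zero.mp h0.2))

theorem statement7_general (h : ℕ) (q : ℤ) (hq : (2 * h : ℤ) ≤ q) :
    PropertyP {x : ℤ | (∃ n : ℕ, x = q ^ n ∨ x = -(q ^ n)) ∨ x = 0} h :=
  propertyP_of_core_eq_of_sum_eq (fun _ => neg_mem_signedPowersWithZero)
    fun _ _ => isCore_eq_of_sum_eq hq

/-- For integer q with q ≥ 2h and h ≥ 2, the set of all ±q^n together with 0 satisfies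
property P(h). -/
theorem statement7 (h : ℕ) (q : ℤ) (hh : 2 ≤ h) (hq : (2 * h : ℤ) ≤ q) :
    PropertyP {x : ℤ | (∃ n : ℕ, x = q ^ n ∨ x = -(q ^ n)) ∨ x = 0} h :=
  statement7_general h q hq
end

section
/- For q = 2h - 1 with h ≥ 2, the set S_q = {±q^n : n ≥ 0} ∪ {0} does not satisfy property P(h), because h·q = q + ... + q (h times) equals q^2 + (-q) + ... + (-q) ((h-1) times). -/
/-- For q = 2h - 1 with h ≥ 2, the set of all ±q^n together with 0 does not satisfy
property P(h). -/
theorem statement8 (h : ℕ) (hh : 2 ≤ h) :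
    ¬ PropertyP
      {x : ℤ | (∃ n : ℕ, x = (2 * (h : ℤ) - 1) ^ n ∨ x = -((2 * (h : ℤ) - 1) ^ n)) ∨ x = 0}
      h := by
  intro hP
  set A : Set ℤ := {x : ℤ | (∃ n : ℕ, x = (2 * (h : ℤ) - 1) ^ n ∨ x = -((2 * (h : ℤ) - 1) ^ n)) ∨ x = 0} with hA
  set q : ℤ := 2 * (h : ℤ) - 1 with hqdef
  have hq3 : (3 : ℤ) ≤ q := by
    have : (2 : ℤ) ≤ (h : ℤ) := by exact_mod_cast hh
    omega
  have hc1 : ((h - 1 : ℕ) : ℤ) = (h : ℤ) - 1 := by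
    have := hh; push_cast [Nat.cast_sub (by omega : 1 ≤ h)]; ring
  set s1 : Multiset ℤ := Multiset.replicate h q with hs1def
  set s2 : Multiset ℤ := q ^ 2 ::ₘ Multiset.replicate (h - 1) (-q) with hs2def
  have hqA : q ∈ A := Or.inl ⟨1, Or.inl (by rw [pow_one])⟩
  have hnqA : -q ∈ A := Or.inl ⟨1, Or.inr (by rw [pow_one])⟩
  have hq2A : q ^ 2 ∈ A := Or.inl ⟨2, Or.inl rfl⟩
  have rep1 : IsRep A h ((h : ℤ) * q) s1 := by
    refine ⟨Multiset.card_replicate _ _, ?_, ?_⟩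
    · intro x hx; rw [Multiset.eq_of_mem_replicate hx]; exact hqA
    · rw [hs1def, Multiset.sum_replicate, nsmul_eq_mul]
  have rep2 : IsRep A h ((h : ℤ) * q) s2 := by
    refine ⟨?_, ?_, ?_⟩
    · rw [hs2def, Multiset.card_cons, Multiset.card_replicate]; omega
    · intro x hx
      rw [hs2def, Multiset.mem_cons] at hx
      rcases hx with rfl | hx
      · exact hq2A
      · rw [Multiset.eq_of_mem_replicate hx]; exact hnqA
    · rw [hs2def, Multiset.sum_cons, Multiset.sum_replicate, nsmul_eq_mul, hc1, hqdef]
      ring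
  obtain ⟨c, ⟨hcore, hall⟩, -⟩ := hP ((h : ℤ) * q) ⟨s1, rep1⟩
  obtain ⟨p, hp, hs⟩ := hall s1 rep1
  have hp0 : p = 0 := by
    rw [Multiset.eq_zero_iff_forall_notMem]
    intro u hu
    have hu1 : u ∈ s1 := by
      rw [hs]; exact Multiset.mem_add.2 (Or.inl (Multiset.mem_add.2 (Or.inr hu)))
    have hu2 : -u ∈ s1 := by
      rw [hs]; exact Multiset.mem_add.2 (Or.inr (Multiset.mem_map_of_mem _ hu))
    have e1 := Multiset.eq_of_mem_replicate hu1
    have e2 := Multiset.eq_of_mem_replicate hu2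
    omega
  rw [hp0] at hs
  simp only [Multiset.map_zero, add_zero] at hs
  have hcs1 : c = s1 := hs.symm
  obtain ⟨p', hp', hs'⟩ := hall s2 rep2
  have hcard : Multiset.card s2 = Multiset.card c + 2 * Multiset.card p' := by
    rw [hs']; simp [Multiset.card_add]; ring
  have hcs2 : Multiset.card s2 = h := rep2.1
  have hcs1c : Multiset.card c = h := by rw [hcs1, hs1def, Multiset.card_replicate]
  have hp'0 : p' = 0 := by
    rw [← Multiset.card_eq_zero]; omega
  rw [hp'0] at hs'
  simp only [Multiset.map_zero, add_zero] at hs'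
  rw [hcs1] at hs'
  have : q ^ 2 ∈ s1 := by rw [← hs', hs2def]; exact Multiset.mem_cons_self _ _
  have := Multiset.eq_of_mem_replicate this
  nlinarith
end

section
/- The set A = {±6^n : n ≥ 0} ∪ {0} satisfies property P(3). -/
/-!
Removing cancelling pairs `u, -u` one at a time turns every representation into a core, so
`P(h)` reduces to the injectivity of the sum on cores. A core of `{±m ^ n} ∪ {0}` contains at
most one zero, whose presence is fixed by parity, and its nonzero part is a cancellation-free
multiset of at most `h` signed powers of `m`. If it has `a` terms `1` and `b` terms `-1`, its
sum is congruent to `a - b` modulo `m`, with `|a - b| ≤ h`; for `2h ≤ m` this determines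
`a - b`, except when both cores consist of `±1`s only, where the sums decide directly. The
other terms are divisible by `m`, and induction on the largest exponent finishes. For
`6 = 2 · 3` this is `P(3)`.
-/

open Multiset

theorem MatchesCore.sum_eq {A : Set ℤ} {c s : Multiset ℤ} (hcs : MatchesCore A c s) :
    s.sum = c.sum := by
  obtain ⟨p, -, rfl⟩ := hcs
  simp [Multiset.sum_map_neg']

theorem Multiset.exists_eq_add_add_map_neg {α : Type*} [DecidableEq α] [Neg α]
    (s : Multiset α) :
    ∃ c p : Multiset α, (∀ x ∈ c, -x ∉ c.erase x) ∧ s = c + p + p.map (fun u => -u) := by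
  induction s using Multiset.strongInductionOn with
  | ih s ih =>
    by_cases hpair : ∃ x ∈ s, -x ∈ s.erase x
    · obtain ⟨x, hx, hnx⟩ := hpair
      have hs : s = x ::ₘ (-x) ::ₘ (s.erase x).erase (-x) := by
        rw [cons_erase hnx, cons_erase hx]
      obtain ⟨c, p, hc, hrest⟩ := ih _ ((erase_lt.2 hnx).trans (erase_lt.2 hx))
      refine ⟨c, x ::ₘ p, hc, ?_⟩
      rw [hs, hrest]
      simp only [map_cons, add_cons, cons_add, cons_swap (-x)]
    · push Not at hpair
      exact ⟨s, 0, hpair, by simp⟩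

theorem IsRep.exists_isCore {A : Set ℤ} {h : ℕ} {D : ℤ} {s : Multiset ℤ}
    (hs : IsRep A h D s) :
    ∃ c, IsCore A h c ∧ MatchesCore A c s := by
  obtain ⟨hcard, hA, -⟩ := hs
  obtain ⟨c, p, hc, rfl⟩ := s.exists_eq_add_add_map_neg
  have hcard' : card c + 2 * card p = h := by
    simp only [card_add, card_map] at hcard; omega
  refine ⟨c, ⟨by omega, by omega, fun x hx => hA x (by simp [hx]), hc⟩, p,
    fun u hu => ⟨hA u (by simp [hu]), hA (-u) (by simp [hu])⟩, rfl⟩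

theorem propertyP_of_injOn_sum {A : Set ℤ} {h : ℕ}
    (hinj : Set.InjOn Multiset.sum {c | IsCore A h c}) : PropertyP A h := by
  rintro D ⟨s₀, hs₀⟩
  obtain ⟨c, hc, hcs₀⟩ := hs₀.exists_isCore
  refine ⟨c, ⟨hc, fun s hs => ?_⟩, fun c' ⟨hc', hall⟩ => ?_⟩
  · obtain ⟨c', hc', hc's⟩ := hs.exists_isCore
    rwa [hinj hc hc' (by rw [← hcs₀.sum_eq, ← hc's.sum_eq, hs₀.2.2, hs.2.2])]
  · exact hinj hc' hc (by rw [← (hall s₀ hs₀).sum_eq, hcs₀.sum_eq])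

def signedPowers (m : ℤ) : Set ℤ := {x | ∃ n : ℕ, x = m ^ n ∨ x = -(m ^ n)}

def signedPowersBelow (m : ℤ) (N : ℕ) : Set ℤ := {x | ∃ n < N, x = m ^ n ∨ x = -(m ^ n)}

theorem exists_eq_mul_of_ne_one {m x : ℤ} {N : ℕ}
    (hx : x ∈ signedPowersBelow m (N + 1)) (h1 : x ≠ 1) (h1' : x ≠ -1) :
    ∃ y ∈ signedPowersBelow m N, x = m * y := by
  obtain ⟨_ | n, hn, rfl | rfl⟩ := hx
  · exact absurd (pow_zero m) h1
  · exact absurd (by rw [pow_zero]) h1'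
  · exact ⟨m ^ n, ⟨n, by omega, .inl rfl⟩, pow_succ' m n⟩
  · exact ⟨-(m ^ n), ⟨n, by omega, .inr rfl⟩, by rw [pow_succ', mul_neg]⟩

theorem exists_eq_replicate_add_map_mul {m : ℤ} {N : ℕ} {s : Multiset ℤ}
    (hs : ∀ x ∈ s, x ∈ signedPowersBelow m (N + 1)) (hcancel : ∀ x ∈ s, -x ∉ s) :
    ∃ (a b : ℕ) (r : Multiset ℤ),
      s = replicate a 1 + replicate b (-1) + r.map (m * ·) ∧ (a = 0 ∨ b = 0) ∧
      (∀ y ∈ r, y ∈ signedPowersBelow m N) ∧ ∀ y ∈ r, -y ∉ r := by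
  set r₀ := s.filter (fun x => x ≠ 1 ∧ x ≠ -1)
  have hs_eq : s = replicate (count 1 s) 1 + replicate (count (-1) s) (-1) + r₀ := by
    ext z
    simp only [r₀, count_add, count_replicate, count_filter]
    split_ifs <;> grind
  have hr₀ : ∀ x ∈ r₀, ∃ y ∈ signedPowersBelow m N, x = m * y := fun x hx =>
    have ⟨hxs, h1, h1'⟩ := mem_filter.1 hx
    exists_eq_mul_of_ne_one (hs x hxs) h1 h1'
  choose! f hfP hf using hr₀
  have hr₀_eq : r₀ = (r₀.map f).map (m * ·) := by
    rw [map_map]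
    exact (map_id' r₀).symm.trans (map_congr rfl hf)
  refine ⟨count 1 s, count (-1) s, r₀.map f, hs_eq.trans (by rw [← hr₀_eq]), ?_, ?_, ?_⟩
  · by_contra! h
    exact hcancel 1 (count_pos.1 (Nat.pos_of_ne_zero h.1)) (count_pos.1 (Nat.pos_of_ne_zero h.2))
  · intro y hy
    obtain ⟨x, hx, rfl⟩ := mem_map.1 hy
    exact hfP x hx
  · intro y hy hny
    have hmem : ∀ z ∈ r₀.map f, m * z ∈ s := fun z hz => by
      obtain ⟨x, hx, rfl⟩ := mem_map.1 hz
      exact hf x hx ▸ (mem_filter.1 hx).1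
    exact hcancel _ (hmem y hy) (by simpa using hmem (-y) hny)

theorem eq_of_sum_eq_of_signedPowersBelow {m : ℤ} {h : ℕ} (hm : 2 * (h : ℤ) ≤ m)
    (hm0 : m ≠ 0) (N : ℕ) {s t : Multiset ℤ} (hs : card s ≤ h) (ht : card t ≤ h)
    (hsN : ∀ x ∈ s, x ∈ signedPowersBelow m N)
    (htN : ∀ x ∈ t, x ∈ signedPowersBelow m N)
    (hs_cancel : ∀ x ∈ s, -x ∉ s) (ht_cancel : ∀ x ∈ t, -x ∉ t) (hst : s.sum = t.sum) :
    s = t := by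
  induction N generalizing s t with
  | zero =>
    rw [eq_zero_of_forall_notMem (s := s) fun x hx => by simpa [signedPowersBelow] using hsN x hx,
      eq_zero_of_forall_notMem (s := t) fun x hx => by simpa [signedPowersBelow] using htN x hx]
  | succ N ih =>
    obtain ⟨a, b, r, rfl, hab, hrN, hr_cancel⟩ :=
      exists_eq_replicate_add_map_mul hsN hs_cancel
    obtain ⟨c, d, r', rfl, hcd, hr'N, hr'_cancel⟩ :=
      exists_eq_replicate_add_map_mul htN ht_cancel
    simp only [card_add, card_replicate, card_map] at hs ht
    have hmul (q : Multiset ℤ) : (q.map (m * ·)).sum = m * q.sum := by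
      rw [sum_map_mul_left, map_id']
    simp only [sum_add, sum_replicate, hmul, nsmul_eq_mul, mul_one, mul_neg] at hst
    have hdigit : (a : ℤ) - b = c - d := by
      by_cases hr : card r = 0 ∧ card r' = 0
      · rw [card_eq_zero.1 hr.1, card_eq_zero.1 hr.2] at hst
        simpa [sub_eq_add_neg] using hst
      · have hdvd : m ∣ (a - b : ℤ) - (c - d) := ⟨r'.sum - r.sum, by linarith⟩
        refine sub_eq_zero.1 (Int.eq_zero_of_abs_lt_dvd hdvd (abs_lt.2 ⟨?_, ?_⟩)) <;> omega
    obtain ⟨rfl, rfl⟩ : a = c ∧ b = d := by omega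
    rw [ih (by omega) (by omega) hrN hr'N hr_cancel hr'_cancel
      (mul_left_cancel₀ hm0 (by linarith))]

theorem eq_of_sum_eq_of_signedPowers {m : ℤ} {h : ℕ} (hm : 2 * (h : ℤ) ≤ m)
    {s t : Multiset ℤ} (hs : card s ≤ h) (ht : card t ≤ h)
    (hs_pow : ∀ x ∈ s, x ∈ signedPowers m) (ht_pow : ∀ x ∈ t, x ∈ signedPowers m)
    (hs_cancel : ∀ x ∈ s, -x ∉ s) (ht_cancel : ∀ x ∈ t, -x ∉ t) (hst : s.sum = t.sum) :
    s = t := by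
  rcases Nat.eq_zero_or_pos h with rfl | hh
  · rw [card_eq_zero.1 (Nat.le_zero.1 hs), card_eq_zero.1 (Nat.le_zero.1 ht)]
  have hst_pow : ∀ x ∈ s + t, ∃ n : ℕ, x = m ^ n ∨ x = -(m ^ n) := fun x hx =>
    (mem_add.1 hx).elim (hs_pow x) (ht_pow x)
  choose! e he using hst_pow
  have hN : ∀ x ∈ s + t, x ∈ signedPowersBelow m ((s + t).toFinset.sup e + 1) :=
    fun x hx => ⟨e x, Nat.lt_succ_of_le (Finset.le_sup (mem_toFinset.2 hx)), he x hx⟩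
  exact eq_of_sum_eq_of_signedPowersBelow hm (by omega) _ hs ht
    (fun x hx => hN x (mem_add.2 (.inl hx))) (fun x hx => hN x (mem_add.2 (.inr hx)))
    hs_cancel ht_cancel hst

theorem IsCore.count_zero_le_one {A : Set ℤ} {h : ℕ} {c : Multiset ℤ} (hc : IsCore A h c) :
    count 0 c ≤ 1 := by
  by_contra! h2
  refine hc.2.2.2 0 (count_pos.1 (by omega)) ?_
  rw [neg_zero, ← count_pos, count_erase_self]
  omega

theorem IsCore.forall_neg_notMem_filter_ne_zero {A : Set ℤ} {h : ℕ} {c : Multiset ℤ}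
    (hc : IsCore A h c) : ∀ x ∈ c.filter (· ≠ 0), -x ∉ c.filter (· ≠ 0) := by
  intro x hx hnx
  rw [mem_filter] at hx hnx
  exact hc.2.2.2 x hx.1 ((mem_erase_of_ne (by omega)).2 hnx.1)

theorem injOn_sum_isCore_signedPowers {m : ℤ} {h : ℕ} (hm : 2 * (h : ℤ) ≤ m) :
    Set.InjOn Multiset.sum {c | IsCore {x | x ∈ signedPowers m ∨ x = 0} h c} := by
  intro c hc c' hc' hsum
  have hpow {c : Multiset ℤ} (hc : IsCore {x | x ∈ signedPowers m ∨ x = 0} h c) :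
      ∀ x ∈ c.filter (· ≠ 0), x ∈ signedPowers m := fun x hx =>
    (hc.2.2.1 x (mem_filter.1 hx).1).resolve_right (mem_filter.1 hx).2
  have hsplit (c : Multiset ℤ) : replicate (count 0 c) 0 + c.filter (· ≠ 0) = c := by
    rw [← filter_eq', filter_add_not]
  have hcard (c : Multiset ℤ) : count 0 c + card (c.filter (· ≠ 0)) = card c := by
    simpa using congrArg card (hsplit c)
  have hsum_nonzero (c : Multiset ℤ) : (c.filter (· ≠ 0)).sum = c.sum := by
    simpa using congrArg sum (hsplit c)
  have hnonzero : c.filter (· ≠ 0) = c'.filter (· ≠ 0) := by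
    refine eq_of_sum_eq_of_signedPowers hm ((card_le_card (filter_le _ c)).trans hc.1)
      ((card_le_card (filter_le _ c')).trans hc'.1) (hpow hc) (hpow hc')
      hc.forall_neg_notMem_filter_ne_zero hc'.forall_neg_notMem_filter_ne_zero ?_
    rwa [hsum_nonzero, hsum_nonzero]
  have hzero : count 0 c = count 0 c' := by
    have hparity := hcard c ▸ hc.2.1
    have hparity' := hcard c' ▸ hc'.2.1
    rw [hnonzero] at hparity
    have := hc.count_zero_le_one
    have := hc'.count_zero_le_one
    omega
  rw [← hsplit c, ← hsplit c', hnonzero, hzero]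

/-- The set of all ±6^n together with 0 satisfies property P(3). -/
theorem statement12 :
    PropertyP {x : ℤ | (∃ n : ℕ, x = 6 ^ n ∨ x = -(6 ^ n)) ∨ x = 0} 3 :=
  propertyP_of_injOn_sum (injOn_sum_isCore_signedPowers (by norm_num))
end

section
/- There exists an infinite symmetric set A ⊆ ℤ (i.e., A = -A) satisfying property P(h) whose counting function satisfies |A ∩ [-x,x]| ≥ c·x^{1/(2h-1)} for some constant c > 0 and all x ≥ 1; this can be achieved by the greedy construction where a_n is the smallest integer exceeding a_{n-1} such that {−a_n, a_{−(n−1)},...,a_{n−1}, a_n} satisfies P(h), and at each step a_n ≤ (n−1)^{2h−1} + 1. -/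
/-!
Call `S ⊆ ℤ` relation-free of order `h` if every vanishing sum of at most `2h` elements of
`S ∪ -S` cancels in pairs `(u, -u)`. If `A` is relation-free and `0 ∉ A`, then deleting the
cancelling pairs from a representation of `D` as a sum of `h` elements of `A` gives a core that
does not depend on the representation: for two representations `s`, `t`, the sum of `s` and `-t`
is a vanishing sum of `2h` terms.

Let `a₀ < a₁ < ⋯` be greedy: `aₙ` is the least positive integer keeping `{a₀, …, aₙ}`
relation-free, and `A = T ∪ -T` for `T = {aₙ}`. A positive `z ≤ aₙ` skipped by the
construction satisfies `j z + w = 0` with `0 < |j| ≤ 2h` and `w` a sum of `2h - 1` elements of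
`{0, ±a₀, …, ±aₙ₋₁}`, so `(j, w)` determines `z` and there are at most
`(4h + 1)(2n + 1)^(2h - 1)` such `z`. Hence `aₙ = O(n^(2h - 1))`, which is the counting bound.
-/

open Finset

def OnlyTrivialRelations (h : ℕ) (S : Set ℤ) : Prop :=
  ∀ m : Multiset ℤ, Multiset.card m ≤ 2 * h → (∀ x ∈ m, x ∈ S ∨ -x ∈ S) → m.sum = 0 →
    ∀ b, m.count b = m.count (-b)

theorem Multiset.count_map_neg {α : Type*} [DecidableEq α] [InvolutiveNeg α] (s : Multiset α)
    (b : α) :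
    (s.map Neg.neg).count b = s.count (-b) := by
  conv_lhs => rw [← neg_neg b]
  exact Multiset.count_map_eq_count' _ _ neg_injective _

theorem Multiset.eq_filter_add_replicate_add_replicate {α : Type*} [DecidableEq α] {a b : α}
    (hab : a ≠ b) (m : Multiset α) :
    m = m.filter (fun x => x ≠ a ∧ x ≠ b) + replicate (m.count a) a + replicate (m.count b) b := by
  ext x
  simp only [Multiset.count_add, Multiset.count_filter, Multiset.count_replicate]
  by_cases hxa : x = a
  · subst hxa; simp [hab, hab.symm]
  · by_cases hxb : x = b
    · subst hxb; simp [hxa, Ne.symm hxa]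
    · simp [hxa, hxb, Ne.symm hxa, Ne.symm hxb]

open scoped Pointwise in
theorem Finset.multiset_sum_mem_nsmul {α : Type*} [DecidableEq α] [AddCommMonoid α]
    {E : Finset α} {m : Multiset α} (hm : ∀ x ∈ m, x ∈ E) : m.sum ∈ Multiset.card m • E := by
  induction m using Multiset.induction with
  | empty => simp
  | cons x m ih =>
    rw [Multiset.sum_cons, Multiset.card_cons, succ_nsmul']
    exact add_mem_add (hm x (Multiset.mem_cons_self x m))
      (ih fun y hy => hm y (Multiset.mem_cons_of_mem hy))

namespace OnlyTrivialRelations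

variable {h : ℕ} {S S' : Set ℤ}

theorem empty (h : ℕ) : OnlyTrivialRelations h ∅ := by
  intro m _ hm _ b
  rw [Multiset.eq_zero_of_forall_notMem (s := m) fun x hx => by simpa using hm x hx]
  rfl

theorem mono (hS : OnlyTrivialRelations h S) (hS' : S' ⊆ S ∪ -S) :
    OnlyTrivialRelations h S' := by
  refine fun m hcard hm => hS m hcard fun x hx => ?_
  rcases hm x hx with hx' | hx'
  · simpa using hS' hx'
  · simpa [or_comm] using hS' hx'

theorem iUnion {B : ℕ → Set ℤ} (hB : Monotone B) (hBh : ∀ n, OnlyTrivialRelations h (B n)) :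
    OnlyTrivialRelations h (⋃ n, B n) := by
  classical
  intro m hcard hm
  have hm' : ∀ x ∈ m, ∃ n, x ∈ B n ∨ -x ∈ B n := fun x hx => by
    simpa [Set.mem_iUnion, exists_or] using hm x hx
  choose! n hn using hm'
  refine hBh (m.toFinset.sup n) m hcard fun x hx => ?_
  have hle := hB (Finset.le_sup (f := n) (Multiset.mem_toFinset.2 hx))
  exact (hn x hx).imp (@hle x) (@hle (-x))

theorem exists_relation_of_not_insert {z : ℤ} (hS : OnlyTrivialRelations h S) (hz : z ≠ 0)
    (hbad : ¬ OnlyTrivialRelations h (insert z S)) :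
    ∃ (j : ℤ) (m : Multiset ℤ), j ≠ 0 ∧ |j| ≤ 2 * h ∧ Multiset.card m < 2 * h ∧
      (∀ x ∈ m, x ∈ S ∨ -x ∈ S) ∧ j * z + m.sum = 0 := by
  classical
  simp only [OnlyTrivialRelations, not_forall] at hbad
  obtain ⟨m, hcard, hm, hsum, b, hb⟩ := hbad
  have hzz : z ≠ -z := by omega
  set r := m.filter (fun x => x ≠ z ∧ x ≠ -z)
  have hsplit : m = r + _ + _ := Multiset.eq_filter_add_replicate_add_replicate hzz m
  have hcard' : Multiset.card m = Multiset.card r + m.count z + m.count (-z) := by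
    conv_lhs => rw [hsplit]
    simp only [Multiset.card_add, Multiset.card_replicate]
  have hsum' : m.sum = r.sum + (m.count z - m.count (-z) : ℤ) * z := by
    conv_lhs => rw [hsplit]
    simp only [Multiset.sum_add, Multiset.sum_replicate, nsmul_eq_mul]
    ring
  have hr : ∀ x ∈ r, x ∈ S ∨ -x ∈ S := fun x hx => by
    obtain ⟨hxm, hxz, hxz'⟩ := Multiset.mem_filter.1 hx
    have := hm x hxm
    simp only [Set.mem_insert_iff, neg_eq_iff_eq_neg] at this
    tauto
  have hcount_r : ∀ y, y ≠ z → y ≠ -z → r.count y = m.count y := fun y h1 h2 =>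
    Multiset.count_filter_of_pos ⟨h1, h2⟩
  -- with `z` and `-z` balanced, `r` would be a nontrivial relation of `S`
  have hne : m.count z ≠ m.count (-z) := by
    intro he
    have hr0 := hS r (by omega) hr (by rw [he, sub_self, zero_mul, add_zero] at hsum'; omega)
    apply hb
    by_cases hbz : b = z
    · rw [hbz, he]
    by_cases hbz' : b = -z
    · rw [hbz', neg_neg, he]
    rw [← hcount_r b hbz hbz', ← hcount_r (-b) (by omega) (by omega), hr0]
  refine ⟨m.count z - m.count (-z), r, by omega, ?_, by omega, hr, by omega⟩
  rw [abs_le]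
  constructor <;> omega

theorem insert_of_lt {M : ℕ} {z : ℤ} (hS : OnlyTrivialRelations h S) (hM : ∀ y ∈ S, |y| ≤ M)
    (hz : 2 * h * M < |z|) : OnlyTrivialRelations h (insert z S) := by
  by_contra hbad
  have hz0 : z ≠ 0 := abs_pos.1 (lt_of_le_of_lt (by positivity) hz)
  obtain ⟨j, m, hj, -, hcard, hm, hrel⟩ := exists_relation_of_not_insert hS hz0 hbad
  have hmM : |m.sum| ≤ Multiset.card m * M := by
    refine Multiset.abs_sum_le_sum_abs.trans ?_
    simpa using Multiset.sum_le_card_nsmul (m.map abs) M (by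
      simp only [Multiset.mem_map]
      rintro _ ⟨x, hx, rfl⟩
      rcases hm x hx with hx' | hx'
      · exact hM x hx'
      · simpa using hM (-x) hx')
  have hcardM : (Multiset.card m : ℤ) * M ≤ 2 * h * M := by
    gcongr
    exact_mod_cast hcard.le
  have hjz : |z| ≤ |j * z| := by
    rw [abs_mul]
    exact le_mul_of_one_le_left (abs_nonneg z) (Int.one_le_abs hj)
  rw [show j * z = -m.sum by omega, abs_neg] at hjz
  omega

end OnlyTrivialRelations

open scoped Pointwise in
theorem OnlyTrivialRelations.card_le_of_not_insert {h : ℕ} {S Z : Finset ℤ}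
    (hS : OnlyTrivialRelations h ↑S) (hZ : ∀ z ∈ Z, z ≠ 0 ∧ ¬ OnlyTrivialRelations h (insert z ↑S)) :
    #Z ≤ (4 * h + 1) * (2 * #S + 1) ^ (2 * h - 1) := by
  classical
  set E : Finset ℤ := insert 0 (S ∪ -S)
  have hE : #E ≤ 2 * #S + 1 := by
    have := card_union_le S (-S)
    rw [card_neg] at this
    exact (card_insert_le _ _).trans (by omega)
  -- each such `z` is determined by a relation `j * z + w = 0` with `w ∈ (2h - 1) • E`
  have hZ_sub : Z ⊆ (Icc (-(2 * h : ℤ)) (2 * h) ×ˢ ((2 * h - 1) • E)).image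
      (fun p => -p.2 / p.1) := by
    intro z hz
    obtain ⟨j, m, hj, hjh, hcard, hm, hrel⟩ := hS.exists_relation_of_not_insert (hZ z hz).1 (hZ z hz).2
    have hmE : ∀ x ∈ m, x ∈ E := fun x hx => by
      rcases hm x hx with hx' | hx' <;> rw [mem_coe] at hx' <;> simp [E, hx']
    refine mem_image.2 ⟨(j, m.sum), mem_product.2 ⟨mem_Icc.2 (abs_le.1 hjh), ?_⟩, ?_⟩
    · exact nsmul_subset_nsmul_right (mem_insert_self 0 _) (by omega)
        (multiset_sum_mem_nsmul hmE)
    · rw [show -m.sum = j * z by omega]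
      exact Int.mul_ediv_cancel_left z hj
  calc #Z ≤ #(Icc (-(2 * h : ℤ)) (2 * h) ×ˢ ((2 * h - 1) • E)) :=
        (card_le_card hZ_sub).trans card_image_le
    _ ≤ (4 * h + 1) * #E ^ (2 * h - 1) := by
        rw [card_product, Int.card_Icc]
        gcongr
        · omega
        · exact card_nsmul_le
    _ ≤ (4 * h + 1) * (2 * #S + 1) ^ (2 * h - 1) := by gcongr

def cancelPairs {α : Type*} [DecidableEq α] [Neg α] (s : Multiset α) : Multiset α :=
  s - s.map Neg.neg

theorem count_cancelPairs {α : Type*} [DecidableEq α] [InvolutiveNeg α] (s : Multiset α) (b : α) :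
    (cancelPairs s).count b = s.count b - s.count (-b) := by
  rw [cancelPairs, Multiset.count_sub, Multiset.count_map_neg]

section PropertyP

variable {A : Set ℤ} {h : ℕ}

theorem matchesCore_cancelPairs {s : Multiset ℤ} (hsA : ∀ x ∈ s, x ∈ A) (h0 : (0 : ℤ) ∉ A) :
    MatchesCore A (cancelPairs s) s := by
  classical
  -- the positive member of each cancelling pair `(u, -u)` of `s`
  set p := s.filter (0 < ·) ∩ s.map Neg.neg
  have hp : ∀ b, p.count b = if 0 < b then min (s.count b) (s.count (-b)) else 0 := fun b => by
    by_cases hb : 0 < b <;> simp [p, Multiset.count_inter, Multiset.count_map_neg, hb]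
  have hs0 : s.count 0 = 0 := Multiset.count_eq_zero.2 fun h0s => h0 (hsA 0 h0s)
  refine ⟨p, fun u hu => ?_, ?_⟩
  · have hu' := Multiset.mem_inter.1 hu
    exact ⟨hsA u (Multiset.mem_of_mem_filter hu'.1), by
      obtain ⟨v, hv, rfl⟩ := Multiset.mem_map.1 hu'.2
      simpa using hsA v hv⟩
  · ext b
    rw [Multiset.count_add, Multiset.count_add, count_cancelPairs, Multiset.count_map_neg, hp, hp,
      neg_neg]
    rcases lt_trichotomy 0 b with hb | rfl | hb
    · rw [if_pos hb, if_neg (by omega)]; omega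
    · simp [hs0]
    · rw [if_neg (by omega), if_pos (by omega)]; omega

theorem eq_cancelPairs_of_matchesCore {c s : Multiset ℤ} (hc : IsCore A h c)
    (hcs : MatchesCore A c s) (h0 : (0 : ℤ) ∉ A) : c = cancelPairs s := by
  obtain ⟨-, -, hcA, hc_neg⟩ := hc
  obtain ⟨p, -, rfl⟩ := hcs
  have hc0 : c.count 0 = 0 := Multiset.count_eq_zero.2 fun h0c => h0 (hcA 0 h0c)
  have hdisj : ∀ b, c.count b = 0 ∨ c.count (-b) = 0 := fun b => by
    by_cases hb : b = 0
    · simp [hb, hc0]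
    by_contra! hbc
    exact hc_neg b (Multiset.count_pos.1 (by omega))
      (Multiset.count_pos.1 (by rw [Multiset.count_erase_of_ne (by omega)]; omega))
  ext b
  simp only [count_cancelPairs, Multiset.count_add, Multiset.count_map_neg, neg_neg]
  rcases hdisj b with hb | hb <;> omega

theorem cancelPairs_eq_of_isRep {D : ℤ} {s t : Multiset ℤ} (hA : OnlyTrivialRelations h A)
    (hs : IsRep A h D s) (ht : IsRep A h D t) : cancelPairs s = cancelPairs t := by
  obtain ⟨hs_card, hsA, hs_sum⟩ := hs
  obtain ⟨ht_card, htA, ht_sum⟩ := ht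
  have hrel := hA (s + t.map Neg.neg) (by simp [hs_card, ht_card]; omega)
    (fun x hx => by
      rcases Multiset.mem_add.1 hx with hx | hx
      · exact Or.inl (hsA x hx)
      · obtain ⟨y, hy, rfl⟩ := Multiset.mem_map.1 hx
        exact Or.inr (by simpa using htA y hy))
    (by simp [Multiset.sum_map_neg', hs_sum, ht_sum])
  ext b
  have hb := hrel b
  simp only [Multiset.count_add, Multiset.count_map_neg, neg_neg] at hb
  rw [count_cancelPairs, count_cancelPairs]
  omega

theorem isCore_cancelPairs {D : ℤ} {s : Multiset ℤ} (hs : IsRep A h D s) (h0 : (0 : ℤ) ∉ A) :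
    IsCore A h (cancelPairs s) := by
  obtain ⟨hs_card, hsA, -⟩ := hs
  obtain ⟨p, -, hsp⟩ := matchesCore_cancelPairs hsA h0
  have hcard : Multiset.card s = Multiset.card (cancelPairs s) + 2 * Multiset.card p := by
    conv_lhs => rw [hsp]
    simp only [Multiset.card_add, Multiset.card_map]
    ring
  refine ⟨by omega, by omega, fun x hx => hsA x (Multiset.mem_of_le tsub_le_self hx),
    fun x hx hx' => ?_⟩
  have hx0 : x ≠ 0 := by
    rintro rfl
    exact h0 (hsA 0 (Multiset.mem_of_le tsub_le_self hx))
  rw [← Multiset.count_pos, count_cancelPairs] at hx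
  rw [← Multiset.count_pos, Multiset.count_erase_of_ne (by omega), count_cancelPairs,
    neg_neg] at hx'
  omega

theorem propertyP_of_onlyTrivialRelations (hA : OnlyTrivialRelations h A) (h0 : (0 : ℤ) ∉ A) :
    PropertyP A h := by
  rintro D ⟨s, hs⟩
  refine ⟨cancelPairs s, ⟨isCore_cancelPairs hs h0, fun t ht => ?_⟩,
    fun c ⟨hc, hcs⟩ => eq_cancelPairs_of_matchesCore hc (hcs s hs) h0⟩
  rw [cancelPairs_eq_of_isRep hA hs ht]
  exact matchesCore_cancelPairs ht.2.1 h0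

end PropertyP

section Greedy

-- Asking for `z > max S` instead of `z ∉ S` gives the same sequence (`greedySeq_strictMono`);
-- with `z ∉ S`, every skipped `z` is blocked at the current step.
def IsGreedyCandidate (h : ℕ) (S : Finset ℤ) (z : ℤ) : Prop :=
  0 < z ∧ z ∉ S ∧ OnlyTrivialRelations h (insert z ↑S)

theorem exists_isGreedyCandidate (h : ℕ) {S : Finset ℤ} (hS : OnlyTrivialRelations h ↑S) :
    ∃ n : ℕ, IsGreedyCandidate h S n := by
  set M := ∑ y ∈ S, y.natAbs
  have hM : ∀ y ∈ (S : Set ℤ), |y| ≤ M := fun y hy => by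
    rw [Int.abs_eq_natAbs]
    exact_mod_cast single_le_sum (fun _ _ => Nat.zero_le _) (mem_coe.1 hy)
  refine ⟨(2 * h + 1) * M + 1, by positivity, fun hz => ?_, hS.insert_of_lt hM ?_⟩
  · have := hM _ (mem_coe.2 hz)
    push_cast at this
    rw [abs_of_pos (by positivity)] at this
    nlinarith
  · push_cast
    rw [abs_of_pos (by positivity)]
    nlinarith

-- The fallback `0` is never taken: the greedy sets stay relation-free.
open scoped Classical in
noncomputable def greedyStep (h : ℕ) (S : Finset ℤ) : ℕ :=
  if H : ∃ n : ℕ, IsGreedyCandidate h S n then Nat.find H else 0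

variable {h : ℕ}

theorem isGreedyCandidate_greedyStep {S : Finset ℤ} (hS : OnlyTrivialRelations h ↑S) :
    IsGreedyCandidate h S (greedyStep h S) := by
  classical
  have H := exists_isGreedyCandidate h hS
  rw [greedyStep, dif_pos H]
  exact Nat.find_spec H

theorem greedyStep_le {S : Finset ℤ} {z : ℤ} (hz : IsGreedyCandidate h S z) :
    (greedyStep h S : ℤ) ≤ z := by
  classical
  have hz' : IsGreedyCandidate h S (z.toNat : ℤ) := by rwa [Int.toNat_of_nonneg hz.1.le]
  rw [greedyStep, dif_pos ⟨_, hz'⟩]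
  have := hz.1
  have := Nat.find_min' (p := fun n : ℕ => IsGreedyCandidate h S n) ⟨_, hz'⟩ hz'
  omega

noncomputable def greedySet (h : ℕ) : ℕ → Finset ℤ
  | 0 => ∅
  | n + 1 => insert (greedyStep h (greedySet h n) : ℤ) (greedySet h n)

noncomputable def greedySeq (h n : ℕ) : ℤ := greedyStep h (greedySet h n)

variable (h)

theorem greedySet_succ (n : ℕ) :
    greedySet h (n + 1) = insert (greedySeq h n) (greedySet h n) := rfl

theorem onlyTrivialRelations_greedySet (n : ℕ) : OnlyTrivialRelations h ↑(greedySet h n) := by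
  induction n with
  | zero => simpa [greedySet] using OnlyTrivialRelations.empty h
  | succ n ih =>
    rw [greedySet_succ, coe_insert]
    exact (isGreedyCandidate_greedyStep ih).2.2

theorem isGreedyCandidate_greedySeq (n : ℕ) :
    IsGreedyCandidate h (greedySet h n) (greedySeq h n) :=
  isGreedyCandidate_greedyStep (onlyTrivialRelations_greedySet h n)

theorem greedySeq_pos (n : ℕ) : 0 < greedySeq h n := (isGreedyCandidate_greedySeq h n).1

theorem greedySet_mono : Monotone (greedySet h) :=
  monotone_nat_of_le_succ fun _ => subset_insert _ _

theorem card_greedySet_le (n : ℕ) : #(greedySet h n) ≤ n := by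
  induction n with
  | zero => simp [greedySet]
  | succ n ih => exact (card_insert_le _ _).trans (by omega)

theorem mem_greedySet {n : ℕ} {y : ℤ} : y ∈ greedySet h n ↔ ∃ k < n, greedySeq h k = y := by
  induction n with
  | zero => simp [greedySet]
  | succ n ih =>
    simp only [greedySet_succ, mem_insert, ih, Nat.lt_succ_iff_lt_or_eq, or_and_right, exists_or,
      exists_eq_left, eq_comm (a := y), or_comm]

theorem greedySeq_strictMono : StrictMono (greedySeq h) := by
  refine strictMono_nat_of_lt_succ fun n => lt_of_le_of_ne ?_ fun heq => ?_
  · obtain ⟨hpos, hnot, hrel⟩ := isGreedyCandidate_greedySeq h (n + 1)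
    refine greedyStep_le ⟨hpos, fun hmem => hnot (greedySet_mono h n.le_succ hmem), ?_⟩
    exact hrel.mono (Set.insert_subset_insert (coe_subset.2 (greedySet_mono h n.le_succ))
      |>.trans Set.subset_union_left)
  · exact (isGreedyCandidate_greedySeq h (n + 1)).2.1 (heq ▸ mem_insert_self _ _)

theorem greedySeq_zero : greedySeq h 0 = 1 := by
  have h1 : IsGreedyCandidate h ∅ 1 := ⟨one_pos, notMem_empty 1, by
    simpa using (OnlyTrivialRelations.empty h).insert_of_lt (z := 1) (M := 0) (by simp) (by simp)⟩
  have := greedyStep_le h1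
  have := greedySeq_pos h 0
  rw [greedySeq, greedySet] at *
  omega

theorem not_onlyTrivialRelations_insert_greedySet {n : ℕ} {z : ℤ} (hz : 0 < z)
    (hz_le : z ≤ greedySeq h n) (hz_mem : z ∉ greedySet h (n + 1)) :
    ¬ OnlyTrivialRelations h (insert z ↑(greedySet h n)) := fun hrel => by
  have hz_not : z ∉ greedySet h n := fun hmem => hz_mem (greedySet_mono h n.le_succ hmem)
  have hz_eq : z = greedySeq h n := le_antisymm hz_le (greedyStep_le ⟨hz, hz_not, hrel⟩)
  exact hz_mem (hz_eq ▸ greedySet_succ h n ▸ mem_insert_self _ _)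

theorem greedySeq_le (n : ℕ) :
    greedySeq h n ≤ ((n + 1 + (4 * h + 1) * (2 * n + 1) ^ (2 * h - 1) : ℕ) : ℤ) := by
  classical
  set I := Icc 1 (greedySeq h n)
  have hskipped := OnlyTrivialRelations.card_le_of_not_insert (onlyTrivialRelations_greedySet h n)
    (Z := I.filter (· ∉ greedySet h (n + 1))) fun z hz => by
      obtain ⟨hzI, hz_mem⟩ := mem_filter.1 hz
      obtain ⟨hz1, hz_le⟩ := mem_Icc.1 hzI
      exact ⟨by omega, not_onlyTrivialRelations_insert_greedySet h (by omega) hz_le hz_mem⟩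
  replace hskipped : _ ≤ (4 * h + 1) * (2 * n + 1) ^ (2 * h - 1) :=
    hskipped.trans (by gcongr; exact card_greedySet_le h n)
  have htaken : #(I.filter (· ∈ greedySet h (n + 1))) ≤ n + 1 :=
    (card_le_card fun z hz => (mem_filter.1 hz).2).trans (card_greedySet_le h _)
  have hI : #I = (greedySeq h n).toNat := by simp [I, Int.card_Icc]
  have hsplit := card_filter_add_card_filter_not (s := I) (· ∈ greedySet h (n + 1))
  have hle : (greedySeq h n).toNat ≤ n + 1 + (4 * h + 1) * (2 * n + 1) ^ (2 * h - 1) := by omega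
  exact (Int.self_le_toNat _).trans (by exact_mod_cast hle)

theorem greedySeq_le_pow (hh : 0 < h) (n : ℕ) :
    greedySeq h n ≤ (((4 * h + 2) * 2 ^ (2 * h - 1) : ℕ) : ℤ) * (n + 1) ^ (2 * h - 1) := by
  refine (greedySeq_le h n).trans ?_
  have hK : 2 * h - 1 ≠ 0 := by omega
  have h1 : n + 1 ≤ 2 ^ (2 * h - 1) * (n + 1) ^ (2 * h - 1) :=
    (Nat.le_self_pow hK _).trans (Nat.le_mul_of_pos_left _ (by positivity))
  have h2 : (2 * n + 1) ^ (2 * h - 1) ≤ 2 ^ (2 * h - 1) * (n + 1) ^ (2 * h - 1) := by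
    rw [← mul_pow]
    gcongr
    omega
  have : n + 1 + (4 * h + 1) * (2 * n + 1) ^ (2 * h - 1) ≤
      (4 * h + 2) * 2 ^ (2 * h - 1) * (n + 1) ^ (2 * h - 1) := by nlinarith
  exact_mod_cast this

theorem onlyTrivialRelations_range_greedySeq :
    OnlyTrivialRelations h (Set.range (greedySeq h)) := by
  have hrange : Set.range (greedySeq h) = ⋃ n, ↑(greedySet h n) := by
    ext y
    simp only [Set.mem_range, Set.mem_iUnion, mem_coe, mem_greedySet]
    exact ⟨fun ⟨k, hk⟩ => ⟨k + 1, k, k.lt_succ_self, hk⟩, fun ⟨_, k, _, hk⟩ => ⟨k, hk⟩⟩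
  rw [hrange]
  exact OnlyTrivialRelations.iUnion (fun _ _ hmn => coe_subset.2 (greedySet_mono h hmn))
    (onlyTrivialRelations_greedySet h)

end Greedy

section Counting

variable {a : ℕ → ℤ}

theorem exists_lt_apply_le_ncard (ha : StrictMono a) (ha0 : a 0 = 1) {x : ℕ} (hx : 1 ≤ x) :
    ∃ N, 0 < N ∧ (x : ℤ) < a N ∧ N ≤ (Set.range a ∩ Set.Icc (-(x : ℤ)) x).ncard := by
  classical
  have hgrow : ∀ n : ℕ, (n : ℤ) + 1 ≤ a n := fun n => by
    induction n with
    | zero => simp [ha0]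
    | succ n ih => have := ha (Nat.lt_add_one n); push_cast; omega
  have hex : ∃ N, (x : ℤ) < a N := ⟨x, by have := hgrow x; omega⟩
  refine ⟨Nat.find hex, Nat.pos_of_ne_zero fun hN => ?_, Nat.find_spec hex, ?_⟩
  · have := Nat.find_spec hex
    rw [hN, ha0] at this
    omega
  have hsub : ↑((range (Nat.find hex)).image a) ⊆ Set.range a ∩ Set.Icc (-(x : ℤ)) x := by
    intro y hy
    obtain ⟨k, hk, rfl⟩ := mem_image.1 (mem_coe.1 hy)
    have hkx := Nat.find_min hex (mem_range.1 hk)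
    have := hgrow k
    exact ⟨⟨k, rfl⟩, by omega, by omega⟩
  calc Nat.find hex = #((range (Nat.find hex)).image a) := by
        rw [card_image_of_injective _ ha.injective, card_range]
    _ ≤ _ := by
        rw [← Set.ncard_coe_finset]
        exact Set.ncard_le_ncard hsub ((Set.finite_Icc _ _).subset Set.inter_subset_right)

theorem exists_mul_rpow_le_ncard (ha : StrictMono a) (ha0 : a 0 = 1) {C K : ℕ} (hK : K ≠ 0)
    (haC : ∀ n, a n ≤ C * (n + 1) ^ K) :
    ∃ c : ℝ, 0 < c ∧ ∀ x : ℕ, 1 ≤ x →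
      c * (x : ℝ) ^ (K : ℝ)⁻¹ ≤ (Set.range a ∩ Set.Icc (-(x : ℤ)) x).ncard := by
  have hC : (0 : ℝ) < C := by
    have := haC 0
    rw [ha0] at this
    exact Nat.cast_pos.2 (by simp at this; omega)
  have hCK : 0 < (C : ℝ) ^ (K : ℝ)⁻¹ := Real.rpow_pos_of_pos hC _
  refine ⟨(2 * (C : ℝ) ^ (K : ℝ)⁻¹)⁻¹, by positivity, fun x hx => ?_⟩
  obtain ⟨N, hN0, hxN, hN⟩ := exists_lt_apply_le_ncard ha ha0 hx
  have hxC : (x : ℝ) ≤ C * (2 * N) ^ K := by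
    have : (x : ℤ) ≤ C * (2 * N) ^ K := (hxN.le.trans (haC N)).trans (by gcongr; omega)
    exact_mod_cast this
  have hroot : (x : ℝ) ^ (K : ℝ)⁻¹ ≤ C ^ (K : ℝ)⁻¹ * (2 * N) :=
    calc (x : ℝ) ^ (K : ℝ)⁻¹ ≤ (C * (2 * N) ^ K) ^ (K : ℝ)⁻¹ :=
          Real.rpow_le_rpow (by positivity) hxC (by positivity)
      _ = C ^ (K : ℝ)⁻¹ * (2 * N) := by
          rw [Real.mul_rpow (by positivity) (by positivity),
            Real.pow_rpow_inv_natCast (by positivity) hK]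
  calc (2 * (C : ℝ) ^ (K : ℝ)⁻¹)⁻¹ * (x : ℝ) ^ (K : ℝ)⁻¹
      ≤ (2 * (C : ℝ) ^ (K : ℝ)⁻¹)⁻¹ * (C ^ (K : ℝ)⁻¹ * (2 * N)) := by gcongr
    _ = N := by field_simp
    _ ≤ _ := by exact_mod_cast hN

end Counting

/-- There exists an infinite symmetric P(h)-set whose counting function grows at least
like x^(1/(2h-1)). -/
theorem statement16 (h : ℕ) (hh : 2 ≤ h) :
    ∃ A : Set ℤ, A.Infinite ∧ A = -A ∧ PropertyP A h ∧
      ∃ c : ℝ, 0 < c ∧ ∀ x : ℕ, 1 ≤ x →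
        c * (x : ℝ) ^ ((1 : ℝ) / (2 * (h : ℝ) - 1)) ≤
          ((A ∩ Set.Icc (-(x : ℤ)) (x : ℤ)).ncard : ℝ) := by
  set T := Set.range (greedySeq h)
  have hT0 : (0 : ℤ) ∉ T ∪ -T := by
    rintro (⟨n, hn⟩ | ⟨n, hn⟩)
    · exact (greedySeq_pos h n).ne' hn
    · exact (greedySeq_pos h n).ne' (by simpa using hn)
  obtain ⟨c, hc, hcount⟩ := exists_mul_rpow_le_ncard (greedySeq_strictMono h) (greedySeq_zero h)
    (by omega) (greedySeq_le_pow h (by omega))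
  have hexp : (1 : ℝ) / (2 * h - 1) = ((2 * h - 1 : ℕ) : ℝ)⁻¹ := by
    rw [one_div, Nat.cast_sub (by omega)]
    push_cast
    ring
  refine ⟨T ∪ -T, (Set.infinite_range_of_injective (greedySeq_strictMono h).injective).mono
      Set.subset_union_left, by rw [Set.union_neg, neg_neg, Set.union_comm],
    propertyP_of_onlyTrivialRelations ((onlyTrivialRelations_range_greedySeq h).mono subset_rfl) hT0,
    c, hc, fun x hx => ?_⟩
  rw [hexp]
  refine (hcount x hx).trans ?_
  exact_mod_cast Set.ncard_le_ncard (Set.inter_subset_inter_left _ Set.subset_union_left)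
    ((Set.finite_Icc _ _).subset Set.inter_subset_right)
end

section
/- Let {λ_n} be a strictly increasing sequence of positive reals with λ_{n+1} ≥ q λ_n for q > 1, and suppose α_1 + ... + α_{h'} = β_1 + ... + β_{h''} where each α_i, β_j belongs to {λ_n}, h' , h'' ≥ 1, and h' + h'' ≤ 2h with 2h - 1 < q. Then h' = h'' and the multiset {α_1,...,α_{h'}} equals the multiset {β_1,...,β_{h''}}. -/
lemma multiset_exists_max (s : Multiset ℝ) (h0 : s ≠ 0) :
    ∃ a ∈ s, ∀ x ∈ s, x ≤ a := by
  induction s using Multiset.induction_on with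
  | empty => exact absurd rfl h0
  | cons a s ih =>
    by_cases hs : s = 0
    · subst hs
      exact ⟨a, Multiset.mem_cons_self a 0, by simp⟩
    · obtain ⟨b, hb, hball⟩ := ih hs
      refine ⟨max a b, ?_, ?_⟩
      · rcases le_total a b with hab | hab
        · rw [max_eq_right hab]; exact Multiset.mem_cons_of_mem hb
        · rw [max_eq_left hab]; exact Multiset.mem_cons_self a s
      · intro x hx
        rcases Multiset.mem_cons.1 hx with rfl | hx
        · exact le_max_left _ _
        · exact le_trans (hball x hx) (le_max_right _ _)

lemma statement18_aux (h : ℕ) (q : ℝ) (lam : ℕ → ℝ) (hh : 2 ≤ h) (hq1 : 1 < q)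
    (hmono : StrictMono lam) (hpos : ∀ n, 0 < lam n)
    (hlac : ∀ n, q * lam n ≤ lam (n + 1)) (hq : (2 * h - 1 : ℝ) < q) :
    ∀ N : ℕ, ∀ s t : Multiset ℝ, (∀ x ∈ s, ∃ n, x = lam n) → (∀ x ∈ t, ∃ n, x = lam n) →
    s ≠ 0 → t ≠ 0 → Multiset.card s + Multiset.card t ≤ 2 * h →
    Multiset.card s + Multiset.card t ≤ N → s.sum = t.sum → s = t := by
  have gap : ∀ m n : ℕ, lam m < lam n → q * lam m ≤ lam n := by
    intro m n hmn
    have hlt : m < n := hmono.lt_iff_lt.1 hmn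
    exact le_trans (hlac m) (hmono.monotone hlt)
  have max_le_sum : ∀ (u : Multiset ℝ), (∀ x ∈ u, ∃ n, x = lam n) →
      ∀ c ∈ u, c ≤ u.sum := by
    intro u hu c hc
    have heq : u = c ::ₘ u.erase c := (Multiset.cons_erase hc).symm
    rw [heq, Multiset.sum_cons]
    have : 0 ≤ (u.erase c).sum := Multiset.sum_nonneg fun x hx => by
      obtain ⟨n, rfl⟩ := hu x (Multiset.mem_of_mem_erase hx); exact (hpos n).le
    linarith
  -- the comparison-of-maxima step
  have main : ∀ (u v : Multiset ℝ) (c d : ℝ), (∀ x ∈ u, ∃ n, x = lam n) →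
      (∀ x ∈ v, ∃ n, x = lam n) → c ∈ u → d ∈ v → (∀ x ∈ v, x ≤ d) →
      Multiset.card u + Multiset.card v ≤ 2 * h → u.sum = v.sum → ¬ d < c := by
    intro u v c d hu hv hcu hdv hdmax hcv husum hdc
    obtain ⟨m, hm⟩ := hu c hcu
    obtain ⟨n, hn⟩ := hv d hdv
    subst hm; subst hn
    have hqd : q * lam n ≤ lam m := gap n m hdc
    have h1 : lam m ≤ u.sum := max_le_sum u hu _ hcu
    have h2 : v.sum ≤ Multiset.card v • lam n := Multiset.sum_le_card_nsmul v _ hdmax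
    rw [nsmul_eq_mul] at h2
    have hcu1 : 1 ≤ Multiset.card u :=
      Multiset.card_pos.2 (fun h0 => by subst h0; exact absurd hcu (Multiset.notMem_zero _))
    have hcv' : (Multiset.card v : ℝ) ≤ 2 * h - 1 := by
      have hnat : Multiset.card v + 1 ≤ 2 * h := by omega
      have := (Nat.cast_le (α := ℝ)).2 hnat
      push_cast at this; linarith
    have hn0 : 0 < lam n := hpos n
    nlinarith [mul_le_mul_of_nonneg_right hcv' hn0.le]
  intro N
  induction N with
  | zero =>
    intro s t _ _ hs0 _ _ hN _
    have : 0 < Multiset.card s := Multiset.card_pos.2 hs0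
    omega
  | succ N ih =>
    intro s t hs ht hs0 ht0 hcard hN hsum
    obtain ⟨a, ha, hamax⟩ := multiset_exists_max s hs0
    obtain ⟨b, hb, hbmax⟩ := multiset_exists_max t ht0
    have hab : a = b := by
      rcases lt_trichotomy a b with hlt | heq | hlt
      · exact absurd hlt (main t s b a ht hs hb ha hamax (by omega) hsum.symm)
      · exact heq
      · exact absurd hlt (main s t a b hs ht ha hb hbmax hcard hsum)
    subst hab
    have hse : s = a ::ₘ s.erase a := (Multiset.cons_erase ha).symm
    have hte : t = a ::ₘ t.erase a := (Multiset.cons_erase hb).symm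
    have hsum' : (s.erase a).sum = (t.erase a).sum := by
      have hs' : s.sum = a + (s.erase a).sum := by rw [hse, Multiset.sum_cons]; rw [← hse]
      have ht' : t.sum = a + (t.erase a).sum := by rw [hte, Multiset.sum_cons]; rw [← hte]
      rw [hs', ht'] at hsum; linarith
    have hpos_sum : ∀ (u : Multiset ℝ), (∀ x ∈ u, ∃ n, x = lam n) → u.sum = 0 → u = 0 := by
      intro u hu h0
      by_contra hu0
      obtain ⟨c, hc⟩ := Multiset.exists_mem_of_ne_zero hu0
      obtain ⟨n, rfl⟩ := hu c hc
      have := max_le_sum u hu _ hc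
      have := hpos n
      linarith [h0 ▸ this]
    have hs'mem : ∀ x ∈ s.erase a, ∃ n, x = lam n :=
      fun x hx => hs x (Multiset.mem_of_mem_erase hx)
    have ht'mem : ∀ x ∈ t.erase a, ∃ n, x = lam n :=
      fun x hx => ht x (Multiset.mem_of_mem_erase hx)
    by_cases hse0 : s.erase a = 0
    · have ht0' : t.erase a = 0 := hpos_sum _ ht'mem (by rw [← hsum', hse0]; simp)
      rw [hse, hte, hse0, ht0']
    · by_cases hte0 : t.erase a = 0
      · exact absurd (hpos_sum _ hs'mem (by rw [hsum', hte0]; simp)) hse0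
      · have hcs : Multiset.card (s.erase a) = Multiset.card s - 1 :=
          Multiset.card_erase_of_mem ha
        have hct : Multiset.card (t.erase a) = Multiset.card t - 1 :=
          Multiset.card_erase_of_mem hb
        have hcs1 : 1 ≤ Multiset.card s := Multiset.card_pos.2 hs0
        have hct1 : 1 ≤ Multiset.card t := Multiset.card_pos.2 ht0
        have := ih (s.erase a) (t.erase a) hs'mem ht'mem hse0 hte0
          (by omega) (by omega) hsum'
        rw [hse, hte, this]

/-- Key lacunarity step: if two sums of elements of a lacunary sequence with ratio
q > 2h - 1 agree, and the total number of terms is at most 2h, then the two multisets of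
terms coincide. -/
theorem statement18 (h : ℕ) (q : ℝ) (lam : ℕ → ℝ) (hh : 2 ≤ h) (hq1 : 1 < q)
    (hmono : StrictMono lam) (hpos : ∀ n, 0 < lam n)
    (hlac : ∀ n, q * lam n ≤ lam (n + 1)) (hq : (2 * h - 1 : ℝ) < q)
    (s t : Multiset ℝ) (hs : ∀ x ∈ s, ∃ n, x = lam n) (ht : ∀ x ∈ t, ∃ n, x = lam n)
    (hs0 : s ≠ 0) (ht0 : t ≠ 0) (hcard : Multiset.card s + Multiset.card t ≤ 2 * h)
    (hsum : s.sum = t.sum) : s = t :=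
  statement18_aux h q lam hh hq1 hmono hpos hlac hq (Multiset.card s + Multiset.card t)
    s t hs ht hs0 ht0 hcard le_rfl hsum
end
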